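/- arXiv:2301.06688 — 7 statements merged into one kernel-verified Lean document; each statement's English description precedes it below -/
import Mathlib

section
/- Let (X, μ) be a probability space and U : L¹(μ) → L¹(μ) a positive linear contraction (i.e., U is linear, maps nonnegative functions to nonnegative functions, and has operator norm at most 1). For a real-valued ψ ∈ L¹(μ), define ψ₀ = 0 and ψₙ = ψ + Uψ + ⋯ + Uⁿ⁻¹ψ for n ≥ 1. For an integer N > 0, let Ψ_N = max_{0 ≤ n ≤ N} ψₙ. Then ∫_{{x : Ψ_N(x) > 0}} ψ dμ ≥ 0. -/
open MeasureTheory Filter Topology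

/-- **Hopf maximal ergodic lemma.** If `U` is a positive linear contraction of
`L¹(μ)` of a probability space, `ψₙ = ψ + Uψ + ⋯ + Uⁿ⁻¹ψ` (with `ψ₀ = 0`) and
`Ψ_N = max_{0 ≤ n ≤ N} ψₙ`, then `∫_{Ψ_N > 0} ψ dμ ≥ 0`. -/
theorem hopf_maximal_ergodic_lemma
    {X : Type*} [MeasurableSpace X] (μ : Measure X) [IsProbabilityMeasure μ]
    (U : Lp ℝ 1 μ →L[ℝ] Lp ℝ 1 μ)
    (hpos : ∀ f : Lp ℝ 1 μ, 0 ≤ f → 0 ≤ U f)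
    (hnorm : ‖U‖ ≤ 1)
    (ψ : Lp ℝ 1 μ)
    (ψs : ℕ → Lp ℝ 1 μ)
    (hψs : ∀ n, ψs n = ∑ j ∈ Finset.range n, (U ^ j) ψ)
    (N : ℕ) (hN : 0 < N)
    (ΨN : Lp ℝ 1 μ)
    (hΨN : ΨN = (Finset.range (N + 1)).sup' (by simp) ψs) :
    0 ≤ ∫ x in {x : X | 0 < ΨN x}, ψ x ∂μ := by
  classical
  set Φ : Lp ℝ 1 μ := ΨN ⊔ 0 with hΦdef
  have hΦnn : (0 : Lp ℝ 1 μ) ≤ Φ := le_sup_right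
  have hUΦnn : (0 : Lp ℝ 1 μ) ≤ U Φ := hpos _ hΦnn
  have hmono : ∀ f g : Lp ℝ 1 μ, f ≤ g → U f ≤ U g := by
    intro f g h
    have := hpos (g - f) (by rwa [sub_nonneg])
    rw [map_sub] at this
    exact sub_nonneg.mp this
  -- recursion: ψs (n+1) = ψ + U (ψs n)
  have hrec : ∀ n, ψs (n + 1) = ψ + U (ψs n) := by
    intro n
    rw [hψs, hψs, Finset.sum_range_succ', map_sum]
    simp only [pow_succ', ContinuousLinearMap.mul_apply, pow_zero,
      ContinuousLinearMap.one_apply]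
    abel
  have hle : ∀ n ∈ Finset.range (N + 1), ψs n ≤ ΨN := by
    intro n hn
    rw [hΨN]
    exact Finset.le_sup' _ hn
  have hΨle : ΨN ≤ (ψ + U Φ) ⊔ 0 := by
    rw [hΨN]
    apply Finset.sup'_le
    intro n hn
    match n with
    | 0 => simpa [hψs] using (le_sup_right : (0 : Lp ℝ 1 μ) ≤ (ψ + U Φ) ⊔ 0)
    | Nat.succ m =>
      have hm : ψs m ≤ Φ := by
        refine le_trans (hle m ?_) le_sup_left
        simp only [Finset.mem_range] at hn ⊢
        omega
      calc ψs (m + 1) = ψ + U (ψs m) := hrec m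
        _ ≤ ψ + U Φ := by
            have := hmono _ _ hm
            exact add_le_add_right this ψ
        _ ≤ (ψ + U Φ) ⊔ 0 := le_sup_left
  -- pointwise a.e. facts
  set E : Set X := {x : X | 0 < ΨN x} with hE
  have hEmeas : MeasurableSet E :=
    measurableSet_lt measurable_const (Lp.stronglyMeasurable ΨN).measurable
  have hΦae : ⇑Φ =ᵐ[μ] fun x => max (ΨN x) 0 := by
    filter_upwards [Lp.coeFn_sup ΨN 0, Lp.coeFn_zero ℝ 1 μ] with x h1 h2
    simp only [hΦdef, h1, Pi.sup_apply, h2, Pi.zero_apply]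
  have hΨleae : ∀ᵐ x ∂μ, ΨN x ≤ max (ψ x + (U Φ) x) 0 := by
    have h1 := (Lp.coeFn_le _ _).mpr hΨle
    filter_upwards [h1, Lp.coeFn_sup (ψ + U Φ) 0, Lp.coeFn_add ψ (U Φ),
      Lp.coeFn_zero ℝ 1 μ] with x ha hb hc hd
    calc ΨN x ≤ ((ψ + U Φ) ⊔ 0 : Lp ℝ 1 μ) x := ha
      _ = max ((ψ + U Φ : Lp ℝ 1 μ) x) 0 := by
          simp [hb, Pi.sup_apply, hd]
      _ = max (ψ x + (U Φ) x) 0 := by rw [hc]; rfl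
  have hUΦae : 0 ≤ᵐ[μ] ⇑(U Φ) := (Lp.coeFn_nonneg _).mpr hUΦnn
  -- key pointwise inequality on E
  have hkey : ∀ᵐ x ∂μ, x ∈ E → Φ x - (U Φ) x ≤ ψ x := by
    filter_upwards [hΦae, hΨleae] with x h1 h2 hx
    have hx' : 0 < ΨN x := hx
    have hax : ΨN x ≤ ψ x + (U Φ) x := by
      rcases le_total (ψ x + (U Φ) x) 0 with h | h
      · rw [max_eq_right h] at h2; linarith
      · rwa [max_eq_left h] at h2
    have : Φ x ≤ ψ x + (U Φ) x := by
      rw [h1, max_eq_left hx'.le]; exact hax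
    linarith
  -- integrals
  have hψint : Integrable (⇑ψ) μ := L1.integrable_coeFn ψ
  have hΦint : Integrable (⇑Φ) μ := L1.integrable_coeFn Φ
  have hUΦint : Integrable (⇑(U Φ)) μ := L1.integrable_coeFn (U Φ)
  have step1 : ∫ x in E, Φ x ∂μ - ∫ x in E, (U Φ) x ∂μ ≤ ∫ x in E, ψ x ∂μ := by
    rw [← integral_sub (hΦint.restrict) (hUΦint.restrict)]
    refine integral_mono_ae ((hΦint.sub hUΦint).restrict) (hψint.restrict) ?_
    exact (ae_restrict_iff' hEmeas).mpr hkey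
  have step2 : ∫ x in E, Φ x ∂μ = ∫ x, Φ x ∂μ := by
    rw [← integral_add_compl hEmeas hΦint]
    have : ∫ x in Eᶜ, Φ x ∂μ = 0 := by
      rw [setIntegral_congr_ae hEmeas.compl
        (g := fun _ => (0:ℝ)) ?_, integral_zero]
      filter_upwards [hΦae] with x h1 hx
      rw [h1, max_eq_right]
      simpa [hE] using hx
    rw [this, add_zero]
  have step3 : ∫ x in E, (U Φ) x ∂μ ≤ ∫ x, (U Φ) x ∂μ :=
    setIntegral_le_integral hUΦint hUΦae
  have step4 : ∫ x, (U Φ) x ∂μ ≤ ∫ x, Φ x ∂μ := by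
    have hΦae' : 0 ≤ᵐ[μ] ⇑Φ := (Lp.coeFn_nonneg _).mpr hΦnn
    have e1 : ∫ x, Φ x ∂μ = ‖Φ‖ := by
      rw [L1.norm_eq_integral_norm]
      refine integral_congr_ae ?_
      filter_upwards [hΦae'] with x hx
      rw [Real.norm_eq_abs, abs_of_nonneg hx]
    have e2 : ∫ x, (U Φ) x ∂μ ≤ ‖U Φ‖ := by
      rw [L1.norm_eq_integral_norm]
      refine integral_mono hUΦint hUΦint.norm ?_
      intro x; exact le_abs_self _
    have e3 : ‖U Φ‖ ≤ ‖Φ‖ := by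
      calc ‖U Φ‖ ≤ ‖U‖ * ‖Φ‖ := U.le_opNorm Φ
        _ ≤ 1 * ‖Φ‖ := by
            exact mul_le_mul_of_nonneg_right hnorm (norm_nonneg _)
        _ = ‖Φ‖ := one_mul _
    rw [e1]; exact e2.trans e3
  linarith
end

section
/- Let (X, μ) be a probability space, d ≥ 1 an integer, and T : X → Multiset X a measurable multi-valued map such that T(x) has exactly d elements (counted with multiplicity) for every x. Assume μ is invariant in the sense that for every integrable φ, ∫_X (1/d) Σ_{y ∈ T(x)} φ(y) dμ(x) = ∫_X φ dμ. If B is a Borel set that is almost invariant (i.e., there exists a Borel set B' ⊆ B with T(x) ⊆ B for all x ∈ B' and μ(B') = μ(B)), then the complement Bᶜ is also almost invariant with respect to T and μ. -/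
open MeasureTheory Filter Topology

/-- Transfer operator `Uφ(x) = (1/d) Σ'_{y ∈ T(x)} φ(y)` of a `d`-valued
correspondence `T`, with the sum counted with multiplicity. -/
noncomputable def transfer {X E : Type*} [AddCommMonoid E] [Module ℝ E]
    (d : ℕ) (T : X → Multiset X) (φ : X → E) : X → E :=
  fun x => (d : ℝ)⁻¹ • ((T x).map φ).sum

/-- Measurability of the correspondence `T`, expressed via its transfer operator. -/
def MeasCorr {X : Type*} [MeasurableSpace X] (d : ℕ) (T : X → Multiset X) : Prop :=
  ∀ φ : X → ℝ, Measurable φ → Measurable (transfer d T φ)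

/-- `B` is almost invariant with respect to `T` and `μ`: there is a Borel subset
`B' ⊆ B` of full measure in `B` with `T(x) ⊆ B` for all `x ∈ B'`. -/
def AlmostInvariant {X : Type*} [MeasurableSpace X] (μ : Measure X)
    (T : X → Multiset X) (B : Set X) : Prop :=
  ∃ B' : Set X, MeasurableSet B' ∧ B' ⊆ B ∧ (∀ x ∈ B', ∀ y ∈ T x, y ∈ B) ∧ μ B' = μ B

/-- `μ` is invariant for the transfer operator: `∫ Uφ dμ = ∫ φ dμ` for every
integrable `φ`. -/
def UInvariant {X : Type*} [MeasurableSpace X] (μ : Measure X)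
    (d : ℕ) (T : X → Multiset X) : Prop :=
  ∀ φ : X → ℝ, Integrable φ μ →
    Integrable (transfer d T φ) μ ∧ ∫ x, transfer d T φ x ∂μ = ∫ x, φ x ∂μ

/-- `μ` is ergodic: every almost invariant Borel set has measure `0` or `1`. -/
def ErgodicCorr {X : Type*} [MeasurableSpace X] (μ : Measure X)
    (T : X → Multiset X) : Prop :=
  ∀ B : Set X, MeasurableSet B → AlmostInvariant μ T B → μ B = 0 ∨ μ B = 1


/-- If `B` is almost invariant with respect to a `d`-valued measurable
correspondence `T` and a `U`-invariant probability measure `μ`, then so is the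
complement `Bᶜ`. -/
theorem complement_almostInvariant
    {X : Type*} [MeasurableSpace X] (μ : Measure X) [IsProbabilityMeasure μ]
    (d : ℕ) (hd : 1 ≤ d) (T : X → Multiset X)
    (hcard : ∀ x, Multiset.card (T x) = d)
    (hTmeas : MeasCorr d T)
    (hinv : UInvariant μ d T)
    (B : Set X) (hB : MeasurableSet B)
    (hBinv : AlmostInvariant μ T B) :
    AlmostInvariant μ T Bᶜ := by
  obtain ⟨B', hB'meas, hB'sub, hB'inv, hB'eq⟩ := hBinv
  set φ : X → ℝ := B.indicator (fun _ => (1:ℝ)) with hφdef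
  have hφmeas : Measurable φ := measurable_const.indicator hB
  have hφint : Integrable φ μ := (integrable_const (1:ℝ)).indicator hB
  obtain ⟨hUint, hUeq⟩ := hinv φ hφint
  have hφnn : ∀ y, 0 ≤ φ y := by
    intro y; simp only [hφdef]
    exact Set.indicator_nonneg (fun _ _ => zero_le_one) y
  have hUnn : ∀ x, 0 ≤ transfer d T φ x := by
    intro x
    have h1 : (0:ℝ) ≤ ((T x).map φ).sum :=
      Multiset.sum_nonneg (by
        intro a ha
        obtain ⟨y, _, rfl⟩ := Multiset.mem_map.1 ha
        exact hφnn y)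
    exact smul_nonneg (by positivity) h1
  -- on B', transfer = 1
  have hUone : ∀ x ∈ B', transfer d T φ x = 1 := by
    intro x hx
    have hmap : (T x).map φ = Multiset.replicate d 1 := by
      have : (T x).map φ = (T x).map (fun _ => (1:ℝ)) :=
        Multiset.map_congr rfl (fun y hy => by
          simp [hφdef, Set.indicator_of_mem (hB'inv x hx y hy)])
      rw [this, Multiset.map_const', hcard x]
    simp only [transfer, hmap, Multiset.sum_replicate, smul_eq_mul, nsmul_eq_mul, mul_one]
    have hd0 : (d:ℝ) ≠ 0 := by positivity
    field_simp
  -- integrals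
  have hφint_eq : ∫ x, φ x ∂μ = (μ B).toReal := by
    simp [hφdef, integral_indicator hB]
    rfl
  have hsplit : (∫ x in B', transfer d T φ x ∂μ) + (∫ x in B'ᶜ, transfer d T φ x ∂μ)
      = ∫ x, transfer d T φ x ∂μ := integral_add_compl hB'meas hUint
  have hintB' : ∫ x in B', transfer d T φ x ∂μ = (μ B').toReal := by
    rw [setIntegral_congr_fun hB'meas (fun x hx => hUone x hx)]
    simp
    rfl
  have hcompl0 : ∫ x in B'ᶜ, transfer d T φ x ∂μ = 0 := by
    have := hsplit
    rw [hintB', hUeq, hφint_eq, hB'eq] at this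
    linarith
  have hae : transfer d T φ =ᵐ[μ.restrict B'ᶜ] 0 := by
    refine (setIntegral_eq_zero_iff_of_nonneg_ae ?_ hUint.integrableOn).1 hcompl0
    exact Filter.Eventually.of_forall (fun x => hUnn x)
  have hae' : ∀ᵐ x ∂μ, x ∈ B'ᶜ → transfer d T φ x = 0 :=
    (ae_restrict_iff' hB'meas.compl).1 hae
  -- the good set
  set S : Set X := Bᶜ ∩ {x | transfer d T φ x = 0} with hSdef
  have hSmeas : MeasurableSet S :=
    hB.compl.inter ((hTmeas φ hφmeas) (measurableSet_singleton 0))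
  have hSsub : S ⊆ Bᶜ := Set.inter_subset_left
  have hSinv : ∀ x ∈ S, ∀ y ∈ T x, y ∈ Bᶜ := by
    rintro x ⟨hxB, hx0⟩ y hy
    have hd0 : (d:ℝ)⁻¹ ≠ 0 := by positivity
    have hsum0 : ((T x).map φ).sum = 0 := by
      have := hx0
      simp only [transfer, Set.mem_setOf_eq, smul_eq_mul] at this
      exact (mul_eq_zero.1 this).resolve_left hd0
    have hall := Multiset.all_zero_of_le_zero_le_of_sum_eq_zero
      (s := (T x).map φ)
      (by intro a ha; obtain ⟨z, _, rfl⟩ := Multiset.mem_map.1 ha; exact hφnn z) hsum0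
    have hφy : φ y = 0 := hall _ (Multiset.mem_map_of_mem φ hy)
    intro hyB
    simp [hφdef, Set.indicator_of_mem hyB] at hφy
  have hSfull : μ S = μ Bᶜ := by
    have hnull : μ (Bᶜ \ S) = 0 := by
      have hsub : Bᶜ \ S ⊆ {x | ¬ (x ∈ B'ᶜ → transfer d T φ x = 0)} := by
        rintro x ⟨hxB, hxS⟩
        intro h
        exact hxS ⟨hxB, h (fun hxB' => hxB (hB'sub hxB'))⟩
      exact measure_mono_null hsub hae'
    have h1 : μ Bᶜ ≤ μ S := by
      calc μ Bᶜ ≤ μ (S ∪ (Bᶜ \ S)) := measure_mono (fun x hx => by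
            by_cases h : x ∈ S
            · exact Or.inl h
            · exact Or.inr ⟨hx, h⟩)
        _ ≤ μ S + μ (Bᶜ \ S) := measure_union_le _ _
        _ = μ S := by rw [hnull, add_zero]
    exact le_antisymm (measure_mono hSsub) h1
  exact ⟨S, hSmeas, hSsub, hSinv, hSfull⟩
end

section
/- Let (X, μ) be a probability space with a d-valued measurable correspondence T and U-invariant measure μ. Define μ to be ergodic if every almost invariant Borel set has measure 0 or 1. If μ is NOT ergodic, then μ can be written as a strict convex combination μ = λμ₁ + (1−λ)μ₂ with 0 < λ < 1 of two distinct U-invariant Borel probability measures μ₁ ≠ μ₂; specifically, for an almost invariant set B with 0 < μ(B) < 1, the normalized restrictions μ(B)⁻¹ μ|_B and μ(Bᶜ)⁻¹ μ|_{Bᶜ} are both U-invariant. -/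
open MeasureTheory Filter Topology

section Aux

variable {X : Type*} [MeasurableSpace X] {μ : Measure X} [IsProbabilityMeasure μ]
  {d : ℕ} {T : X → Multiset X}

lemma diff_null {A A' : Set X} (hA'm : MeasurableSet A') (hsub : A' ⊆ A)
    (hmeq : μ A' = μ A) : μ (A \ A') = 0 := by
  rw [measure_diff hsub hA'm.nullMeasurableSet (measure_ne_top μ A'), hmeq, tsub_self]

set_option linter.unusedSectionVars false in
lemma ae_restrict_mem_of_null_diff {A A' : Set X} (hA : MeasurableSet A)
    (hnull : μ (A \ A') = 0) : ∀ᵐ x ∂μ.restrict A, x ∈ A' := by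
  rw [ae_restrict_iff' hA, ae_iff]
  convert hnull using 2
  ext x; simp [Set.mem_diff]

/-- The complement-invariance lemma: a.e. point of `Aᶜ` maps into `Aᶜ`. -/
lemma compl_almost (hd : 1 ≤ d) (hcard : ∀ x, Multiset.card (T x) = d)
    (hTmeas : MeasCorr d T) (hinv : UInvariant μ d T)
    {A : Set X} (hA : MeasurableSet A) (hAinv : AlmostInvariant μ T A) :
    ∃ S : Set X, MeasurableSet S ∧ (∀ x ∈ S, ∀ y ∈ T x, y ∈ Aᶜ) ∧ μ (Aᶜ \ S) = 0 := by
  obtain ⟨A', hA'm, hsub, hfwd, hmeq⟩ := hAinv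
  have hdne : (d : ℝ) ≠ 0 := Nat.cast_ne_zero.2 (by omega)
  set g := transfer d T (A.indicator fun _ => (1:ℝ)) with hgdef
  have hgmeas : Measurable g := hTmeas _ (measurable_const.indicator hA)
  have hg0 : ∀ x, 0 ≤ g x := by
    intro x
    apply smul_nonneg (by positivity)
    apply Multiset.sum_nonneg
    intro a ha
    obtain ⟨y, _, rfl⟩ := Multiset.mem_map.1 ha
    exact Set.indicator_nonneg (fun _ _ => zero_le_one) y
  have hg1 : ∀ x ∈ A', g x = 1 := by
    intro x hx
    have hmapeq : ((T x).map (A.indicator fun _ => (1:ℝ))) = (T x).map (fun _ => (1:ℝ)) :=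
      Multiset.map_congr rfl (fun y hy => Set.indicator_of_mem (hfwd x hx y hy) _)
    rw [hgdef]
    show (d : ℝ)⁻¹ • ((T x).map (A.indicator fun _ => (1:ℝ))).sum = 1
    rw [hmapeq, Multiset.map_const', Multiset.sum_replicate, hcard]
    simp [nsmul_eq_mul, hdne]
  have hindint : Integrable (A.indicator fun _ => (1:ℝ)) μ := (integrable_const 1).indicator hA
  obtain ⟨hgint, hgeq⟩ := hinv _ hindint
  have hIA : ∫ x in A, g x ∂μ = (μ A).toReal := by
    have h1 : ∫ x in A, g x ∂μ = ∫ x in A, (1:ℝ) ∂μ :=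
      integral_congr_ae ((ae_restrict_mem_of_null_diff hA (diff_null hA'm hsub hmeq)).mono
        fun x hx => hg1 x hx)
    rw [h1, setIntegral_const, smul_eq_mul, mul_one]
    rfl
  have htot : ∫ x, g x ∂μ = (μ A).toReal := by
    rw [hgeq, integral_indicator hA, setIntegral_const, smul_eq_mul, mul_one]
    rfl
  have hIAc : ∫ x in Aᶜ, g x ∂μ = 0 := by
    have h := integral_add_compl hA hgint
    rw [htot, hIA] at h
    linarith
  have hae0 : g =ᵐ[μ.restrict Aᶜ] 0 :=
    (integral_eq_zero_iff_of_nonneg_ae (ae_of_all _ hg0) hgint.restrict).1 hIAc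
  refine ⟨{x | g x = 0}, hgmeas (measurableSet_singleton 0), ?_, ?_⟩
  · intro x hx y hy
    by_contra hyA
    have hyA' : y ∈ A := not_not.1 hyA
    have hmem : (1:ℝ) ∈ (T x).map (A.indicator fun _ => (1:ℝ)) :=
      Multiset.mem_map.2 ⟨y, hy, by simp [Set.indicator_of_mem hyA']⟩
    have h1 : (1:ℝ) ≤ ((T x).map (A.indicator fun _ => (1:ℝ))).sum :=
      Multiset.single_le_sum (fun a ha => by
        obtain ⟨z, _, rfl⟩ := Multiset.mem_map.1 ha
        exact Set.indicator_nonneg (fun _ _ => zero_le_one) z) _ hmem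
    have hpos : 0 < g x := by
      have : (0:ℝ) < (d : ℝ)⁻¹ * 1 := by positivity
      calc (0:ℝ) < (d : ℝ)⁻¹ * 1 := this
        _ ≤ (d : ℝ)⁻¹ * ((T x).map (A.indicator fun _ => (1:ℝ))).sum := by
            apply mul_le_mul_of_nonneg_left h1 (by positivity)
        _ = g x := rfl
    exact absurd hx (by simp [hpos.ne'])
  · have h : (μ.restrict Aᶜ) ({x | g x = 0}ᶜ) = 0 := by
      have h' := hae0
      rw [EventuallyEq, ae_iff] at h'
      convert h' using 2
      rfl
    rw [Measure.restrict_apply (MeasurableSet.compl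
      (show MeasurableSet {x | g x = 0} from hgmeas (measurableSet_singleton 0)))] at h
    convert h using 2
    ext x; simp [Set.mem_diff]; tauto

/-- Invariance of the normalized restriction to an almost invariant set. -/
lemma restrict_uinv (hd : 1 ≤ d) (hcard : ∀ x, Multiset.card (T x) = d)
    (hTmeas : MeasCorr d T) (hinv : UInvariant μ d T)
    {A : Set X} (hA : MeasurableSet A) (hAinv : AlmostInvariant μ T A) (h0 : μ A ≠ 0) :
    UInvariant ((μ A)⁻¹ • μ.restrict A) d T := by
  obtain ⟨S, hSm, hSfwd, hSnull⟩ := compl_almost hd hcard hTmeas hinv hA hAinv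
  obtain ⟨A', hA'm, hsub, hfwd, hmeq⟩ := hAinv
  intro φ hφ
  have hcne : (μ A)⁻¹ ≠ 0 := ENNReal.inv_ne_zero.2 (measure_ne_top μ A)
  have hcnt : (μ A)⁻¹ ≠ ⊤ := ENNReal.inv_ne_top.2 h0
  rw [integrable_smul_measure hcne hcnt] at hφ
  set ψ := A.indicator φ with hψdef
  have hψint : Integrable ψ μ := (integrable_indicator_iff hA).2 hφ
  obtain ⟨hUψint, hUψeq⟩ := hinv ψ hψint
  have heqA' : ∀ x ∈ A', transfer d T ψ x = transfer d T φ x := by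
    intro x hx
    show (d : ℝ)⁻¹ • ((T x).map ψ).sum = (d : ℝ)⁻¹ • ((T x).map φ).sum
    congr 1
    exact congrArg Multiset.sum
      (Multiset.map_congr rfl fun y hy => Set.indicator_of_mem (hfwd x hx y hy) φ)
  have haeeq : transfer d T ψ =ᵐ[μ.restrict A] transfer d T φ :=
    (ae_restrict_mem_of_null_diff hA (diff_null hA'm hsub hmeq)).mono heqA'
  have hUφint : Integrable (transfer d T φ) (μ.restrict A) := hUψint.restrict.congr haeeq
  have hS0 : ∀ x ∈ S, transfer d T ψ x = 0 := by
    intro x hx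
    show (d : ℝ)⁻¹ • ((T x).map ψ).sum = 0
    have : (T x).map ψ = (T x).map (fun _ => (0:ℝ)) :=
      Multiset.map_congr rfl fun y hy => Set.indicator_of_notMem (hSfwd x hx y hy) φ
    rw [this]; simp
  have haeS : ∀ᵐ x ∂μ.restrict Aᶜ, x ∈ S := ae_restrict_mem_of_null_diff hA.compl hSnull
  have hcompl0 : ∫ x in Aᶜ, transfer d T ψ x ∂μ = 0 := by
    rw [integral_congr_ae (haeS.mono fun x hx => hS0 x hx)]
    simp
  have key : ∫ x in A, transfer d T φ x ∂μ = ∫ x in A, φ x ∂μ := by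
    have h1 : ∫ x in A, transfer d T ψ x ∂μ + ∫ x in Aᶜ, transfer d T ψ x ∂μ
        = ∫ x, transfer d T ψ x ∂μ := integral_add_compl hA hUψint
    rw [hcompl0, add_zero, hUψeq] at h1
    calc ∫ x in A, transfer d T φ x ∂μ = ∫ x in A, transfer d T ψ x ∂μ :=
          integral_congr_ae haeeq.symm
      _ = ∫ x, ψ x ∂μ := h1
      _ = ∫ x in A, φ x ∂μ := integral_indicator hA
  exact ⟨(integrable_smul_measure hcne hcnt).2 hUφint,
    by rw [integral_smul_measure, integral_smul_measure, key]⟩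

lemma compl_almostInvariant (hd : 1 ≤ d) (hcard : ∀ x, Multiset.card (T x) = d)
    (hTmeas : MeasCorr d T) (hinv : UInvariant μ d T)
    {A : Set X} (hA : MeasurableSet A) (hAinv : AlmostInvariant μ T A) :
    AlmostInvariant μ T Aᶜ := by
  obtain ⟨S, hSm, hSfwd, hSnull⟩ := compl_almost hd hcard hTmeas hinv hA hAinv
  refine ⟨Aᶜ ∩ S, hA.compl.inter hSm, Set.inter_subset_left, fun x hx => hSfwd x hx.2, ?_⟩
  have := measure_inter_add_diff Aᶜ hSm (μ := μ)
  rw [hSnull, add_zero] at this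
  exact this

end Aux

/-- If the `U`-invariant probability measure `μ` is **not** ergodic, then it is
a strict convex combination of two distinct `U`-invariant probability measures;
specifically, for an almost invariant Borel set `B` with `0 < μ(B) < 1`, the
normalized restrictions of `μ` to `B` and `Bᶜ` are distinct `U`-invariant
probability measures and `μ = μ(B)·ν₁ + μ(Bᶜ)·ν₂`. -/
theorem not_ergodic_decomposition
    {X : Type*} [MeasurableSpace X] (μ : Measure X) [IsProbabilityMeasure μ]
    (d : ℕ) (hd : 1 ≤ d) (T : X → Multiset X)
    (hcard : ∀ x, Multiset.card (T x) = d)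
    (hTmeas : MeasCorr d T)
    (hinv : UInvariant μ d T)
    (hne : ¬ ErgodicCorr μ T) :
    ∃ B : Set X, MeasurableSet B ∧ AlmostInvariant μ T B ∧
      0 < μ B ∧ μ B < 1 ∧
      (let ν₁ := (μ B)⁻¹ • μ.restrict B
       let ν₂ := (μ Bᶜ)⁻¹ • μ.restrict Bᶜ
       IsProbabilityMeasure ν₁ ∧ IsProbabilityMeasure ν₂ ∧
        UInvariant ν₁ d T ∧ UInvariant ν₂ d T ∧ ν₁ ≠ ν₂ ∧
        μ = μ B • ν₁ + μ Bᶜ • ν₂) := by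
  rw [ErgodicCorr] at hne
  push_neg at hne
  obtain ⟨B, hB, hBinv, hB0, hB1⟩ := hne
  have hBc0 : μ Bᶜ ≠ 0 := by
    rw [measure_compl hB (measure_ne_top μ B), measure_univ]
    intro h
    exact hB1 (by
      have := tsub_eq_zero_iff_le.1 h
      exact le_antisymm prob_le_one this)
  have hBcinv : AlmostInvariant μ T Bᶜ := compl_almostInvariant hd hcard hTmeas hinv hB hBinv
  refine ⟨B, hB, hBinv, pos_iff_ne_zero.2 hB0, lt_of_le_of_ne prob_le_one hB1, ?_⟩
  have hprob1 : IsProbabilityMeasure ((μ B)⁻¹ • μ.restrict B) := by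
    constructor
    rw [Measure.smul_apply, Measure.restrict_apply_univ, smul_eq_mul,
      ENNReal.inv_mul_cancel hB0 (measure_ne_top μ B)]
  have hprob2 : IsProbabilityMeasure ((μ Bᶜ)⁻¹ • μ.restrict Bᶜ) := by
    constructor
    rw [Measure.smul_apply, Measure.restrict_apply_univ, smul_eq_mul,
      ENNReal.inv_mul_cancel hBc0 (measure_ne_top μ Bᶜ)]
  refine ⟨hprob1, hprob2, restrict_uinv hd hcard hTmeas hinv hB hBinv hB0,
    restrict_uinv hd hcard hTmeas hinv hB.compl hBcinv hBc0, ?_, ?_⟩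
  · intro h
    have h1 : ((μ B)⁻¹ • μ.restrict B) B = 1 := by
      rw [Measure.smul_apply, Measure.restrict_apply_self, smul_eq_mul,
        ENNReal.inv_mul_cancel hB0 (measure_ne_top μ B)]
    have h2 : ((μ Bᶜ)⁻¹ • μ.restrict Bᶜ) B = 0 := by
      rw [Measure.smul_apply, Measure.restrict_apply hB]
      simp
    rw [h] at h1
    rw [h1] at h2
    exact one_ne_zero h2
  · rw [smul_smul, smul_smul, ENNReal.mul_inv_cancel hB0 (measure_ne_top μ B),
      ENNReal.mul_inv_cancel hBc0 (measure_ne_top μ Bᶜ), one_smul, one_smul,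
      Measure.restrict_add_restrict_compl hB]
end

section
/- Let (X, μ) be a probability space with a d-valued measurable correspondence T and U-invariant measure μ. If μ is ergodic (every almost invariant Borel set has measure 0 or 1), then μ cannot be written as μ = λμ₁ + (1−λ)μ₂ with 0 < λ < 1 and μ₁ ≠ μ₂ both U-invariant Borel probability measures. In other words, ergodic measures are extreme points of the convex set of U-invariant probability measures. -/
open MeasureTheory Filter Topology

/-- if every element of a real multiset is `≤ 1` and the sum is at least the card,
then every element equals `1`. -/
lemma multiset_all_eq_one : ∀ (s : Multiset ℝ), (∀ a ∈ s, a ≤ 1) →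
    (Multiset.card s : ℝ) ≤ s.sum → ∀ a ∈ s, a = 1 := by
  intro s
  induction s using Multiset.induction_on with
  | empty => simp
  | cons a s ih =>
    intro h1 hsum b hb
    have hs_le : s.sum ≤ (Multiset.card s : ℝ) := by
      simpa using Multiset.sum_le_card_nsmul s 1 (fun x hx => h1 x (Multiset.mem_cons_of_mem hx))
    have hcs : ((Multiset.card (a ::ₘ s) : ℕ) : ℝ) = (Multiset.card s : ℝ) + 1 := by
      push_cast [Multiset.card_cons]
      ring
    rw [Multiset.sum_cons, hcs] at hsum
    have ha1 : a ≤ 1 := h1 a (Multiset.mem_cons_self a s)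
    have ha : a = 1 := by linarith
    rcases Multiset.mem_cons.mp hb with hba | hbs
    · rw [hba, ha]
    · exact ih (fun x hx => h1 x (Multiset.mem_cons_of_mem hx)) (by linarith) b hbs

section Key

variable {X : Type*} [MeasurableSpace X]

/-- Bounds for the transfer operator of a `[0,1]`-valued function. -/
lemma transfer_mem_Icc {d : ℕ} (hd : 1 ≤ d) {T : X → Multiset X}
    (hcard : ∀ x, Multiset.card (T x) = d) {f : X → ℝ}
    (h0 : ∀ y, 0 ≤ f y) (h1 : ∀ y, f y ≤ 1) (x : X) :
    transfer d T f x ∈ Set.Icc (0:ℝ) 1 := by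
  have hdpos : (0:ℝ) < d := by exact_mod_cast hd
  constructor
  · exact smul_nonneg (by positivity) (Multiset.sum_nonneg (by
      intro a ha; obtain ⟨y, _, rfl⟩ := Multiset.mem_map.mp ha; exact h0 y))
  · have : ((T x).map f).sum ≤ (d : ℝ) := by
      have := Multiset.sum_le_card_nsmul ((T x).map f) 1 (by
        intro a ha; obtain ⟨y, _, rfl⟩ := Multiset.mem_map.mp ha; exact h1 y)
      simpa [Multiset.card_map, hcard x] using this
    calc (d : ℝ)⁻¹ • ((T x).map f).sum ≤ (d : ℝ)⁻¹ * (d:ℝ) := by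
          simp only [smul_eq_mul]
          exact mul_le_mul_of_nonneg_left this (by positivity)
      _ = 1 := by field_simp

lemma transfer_eq_one {d : ℕ} (hd : 1 ≤ d) {T : X → Multiset X}
    (hcard : ∀ x, Multiset.card (T x) = d) {f : X → ℝ}
    (h1 : ∀ y, f y ≤ 1) {x : X} (hx : transfer d T f x = 1) :
    ∀ y ∈ T x, f y = 1 := by
  have hdpos : (0:ℝ) < d := by exact_mod_cast hd
  have hsum : ((T x).map f).sum = (d : ℝ) := by
    have : (d : ℝ)⁻¹ * ((T x).map f).sum = 1 := by simpa [transfer, smul_eq_mul] using hx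
    field_simp at this
    linarith
  intro y hy
  have := multiset_all_eq_one ((T x).map f)
    (by intro a ha; obtain ⟨z, _, rfl⟩ := Multiset.mem_map.mp ha; exact h1 z)
    (by rw [hsum]; simp [Multiset.card_map, hcard x])
  exact this (f y) (Multiset.mem_map_of_mem f hy)

/-- Key lemma: if `w` is measurable and the transfer identity
`∫ (U 1_B)·w = ∫ 1_B·w` holds for `B = {0 < w}`, then `B` is almost invariant. -/
lemma key_almost_invariant (μ : Measure X) [IsProbabilityMeasure μ]
    {d : ℕ} (hd : 1 ≤ d) {T : X → Multiset X}
    (hcard : ∀ x, Multiset.card (T x) = d) (hTmeas : MeasCorr d T)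
    {w : X → ℝ} (hw : Measurable w) (hwint : Integrable w μ)
    (hint : ∫ x, transfer d T (Set.indicator {x | 0 < w x} (1 : X → ℝ)) x * w x ∂μ
      = ∫ x, Set.indicator {x | 0 < w x} (1 : X → ℝ) x * w x ∂μ) :
    AlmostInvariant μ T {x | 0 < w x} := by
  set B : Set X := {x | 0 < w x} with hB
  have hBm : MeasurableSet B := measurableSet_lt measurable_const hw
  set f : X → ℝ := Set.indicator B 1 with hf
  have hf0 : ∀ y, 0 ≤ f y := fun y => Set.indicator_nonneg (fun _ _ => zero_le_one) y
  have hf1 : ∀ y, f y ≤ 1 := fun y => Set.indicator_le_self' (fun _ _ => zero_le_one) y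
  have hfm : Measurable f := measurable_const.indicator hBm
  set g : X → ℝ := transfer d T f with hg
  have hgm : Measurable g := hTmeas f hfm
  have hg01 : ∀ x, g x ∈ Set.Icc (0:ℝ) 1 := transfer_mem_Icc hd hcard hf0 hf1
  -- integrabilities
  have hgw_int : Integrable (fun x => g x * w x) μ :=
    hwint.bdd_mul (c := 1) hgm.aestronglyMeasurable
      (ae_of_all _ fun x => by
        rw [Real.norm_eq_abs, abs_le]; exact ⟨by linarith [(hg01 x).1], (hg01 x).2⟩)
  have hfw_int : Integrable (fun x => f x * w x) μ :=
    hwint.bdd_mul (c := 1) hfm.aestronglyMeasurable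
      (ae_of_all _ fun x => by
        rw [Real.norm_eq_abs, abs_le]; exact ⟨by linarith [hf0 x], hf1 x⟩)
  -- the nonpositive function with zero integral
  have hzero : ∫ x, (g x - f x) * w x ∂μ = 0 := by
    simp_rw [sub_mul]
    rw [integral_sub hgw_int hfw_int, hint, sub_self]
  have hnonpos : ∀ x, (g x - f x) * w x ≤ 0 := by
    intro x
    by_cases hxB : x ∈ B
    · have : f x = 1 := Set.indicator_of_mem hxB 1
      have hwx : 0 < w x := hxB
      nlinarith [(hg01 x).2]
    · have : f x = 0 := Set.indicator_of_notMem hxB 1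
      have hwx : w x ≤ 0 := le_of_not_gt hxB
      nlinarith [(hg01 x).1]
  have hae : ∀ᵐ x ∂μ, (g x - f x) * w x = 0 := by
    have hint' : Integrable (fun x => -((g x - f x) * w x)) μ :=
      ((hgw_int.sub hfw_int).congr (by
        filter_upwards with x
        simp only [Pi.sub_apply]
        ring)).neg
    have h0 : (0:X→ℝ) ≤ fun x => -((g x - f x) * w x) := fun x => by
      simpa using hnonpos x
    have hi0 : ∫ x, -((g x - f x) * w x) ∂μ = 0 := by
      rw [integral_neg, hzero, neg_zero]
    have := (integral_eq_zero_iff_of_nonneg h0 hint').mp hi0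
    filter_upwards [this] with x hx
    have : -((g x - f x) * w x) = 0 := hx
    linarith
  -- construct B'
  refine ⟨B ∩ {x | g x = 1}, hBm.inter (hgm (measurableSet_singleton 1)), Set.inter_subset_left,
    ?_, ?_⟩
  · rintro x ⟨hxB, hx1⟩ y hy
    have := transfer_eq_one hd hcard hf1 hx1 y hy
    by_contra hyB
    rw [hf, Set.indicator_of_notMem hyB] at this
    simp at this
  · -- μ (B ∩ {g = 1}) = μ B
    have hsub : B \ (B ∩ {x | g x = 1}) ⊆ {x | ¬ ((g x - f x) * w x = 0)} := by
      rintro x ⟨hxB, hxn⟩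
      have hg1 : g x ≠ 1 := fun h => hxn ⟨hxB, h⟩
      have hfx : f x = 1 := Set.indicator_of_mem hxB 1
      have hwx : 0 < w x := hxB
      intro h
      rcases mul_eq_zero.mp h with h' | h'
      · exact hg1 (by rw [hfx] at h'; linarith)
      · linarith
    have hnull : μ (B \ (B ∩ {x | g x = 1})) = 0 :=
      measure_mono_null hsub hae
    apply le_antisymm
    · exact measure_mono Set.inter_subset_left
    · calc μ B = μ ((B ∩ {x | g x = 1}) ∪ (B \ (B ∩ {x | g x = 1}))) := by
            rw [Set.union_diff_cancel Set.inter_subset_left]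
        _ ≤ μ (B ∩ {x | g x = 1}) + μ (B \ (B ∩ {x | g x = 1})) := measure_union_le _ _
        _ = μ (B ∩ {x | g x = 1}) := by rw [hnull, add_zero]

end Key

/-- An ergodic `U`-invariant probability measure cannot be written as a strict
convex combination of two distinct `U`-invariant probability measures, i.e.
ergodic measures are extreme points of the set of `U`-invariant measures. -/
theorem ergodic_extreme
    {X : Type*} [MeasurableSpace X] (μ : Measure X) [IsProbabilityMeasure μ]
    (d : ℕ) (hd : 1 ≤ d) (T : X → Multiset X)
    (hcard : ∀ x, Multiset.card (T x) = d)
    (hTmeas : MeasCorr d T)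
    (hinv : UInvariant μ d T)
    (herg : ErgodicCorr μ T) :
    ¬ ∃ (lam : ENNReal) (μ₁ μ₂ : Measure X), 0 < lam ∧ lam < 1 ∧
        IsProbabilityMeasure μ₁ ∧ IsProbabilityMeasure μ₂ ∧
        UInvariant μ₁ d T ∧ UInvariant μ₂ d T ∧ μ₁ ≠ μ₂ ∧
        μ = lam • μ₁ + (1 - lam) • μ₂ := by
  rintro ⟨lam, μ₁, μ₂, hl0, hl1, hp1, hp2, hinv1, hinv2, hne, heq⟩
  -- μ₁ is absolutely continuous w.r.t. μ
  have hle : ∀ s : Set X, lam * μ₁ s ≤ μ s := by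
    intro s
    rw [heq]
    simp only [Measure.coe_add, Measure.coe_smul, Pi.add_apply, Pi.smul_apply, smul_eq_mul]
    exact le_add_of_nonneg_right bot_le
  have hac : μ₁ ≪ μ := by
    refine Measure.AbsolutelyContinuous.mk (fun s hs h0 => ?_)
    have := hle s
    rw [h0, le_zero_iff, mul_eq_zero] at this
    rcases this with h | h
    · exact absurd h hl0.ne'
    · exact h
  -- the density
  set ρ : X → ENNReal := μ₁.rnDeriv μ with hρ
  set φ : X → ℝ := fun x => (ρ x).toReal with hφ
  have hφm : Measurable φ := (Measure.measurable_rnDeriv μ₁ μ).ennreal_toReal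
  have hφint : Integrable φ μ := Measure.integrable_toReal_rnDeriv
  have hφ_total : ∫ x, φ x ∂μ = 1 := by
    rw [hφ, hρ, Measure.integral_toReal_rnDeriv hac]
    simp
  -- general transfer identity against 1 - φ
  have hId : ∀ B : Set X, MeasurableSet B →
      ∫ x, transfer d T (Set.indicator B (1 : X → ℝ)) x * (1 - φ x) ∂μ
        = ∫ x, Set.indicator B (1 : X → ℝ) x * (1 - φ x) ∂μ := by
    intro B hBm
    set f : X → ℝ := Set.indicator B 1 with hf
    have hfm : Measurable f := measurable_const.indicator hBm
    have hf0 : ∀ y, 0 ≤ f y := fun y => Set.indicator_nonneg (fun _ _ => zero_le_one) y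
    have hf1 : ∀ y, f y ≤ 1 := fun y => Set.indicator_le_self' (fun _ _ => zero_le_one) y
    have hfint : Integrable f μ :=
      (integrable_indicator_iff hBm).mpr (integrableOn_const (measure_lt_top μ B).ne)
    have hfint1 : Integrable f μ₁ :=
      (integrable_indicator_iff hBm).mpr (integrableOn_const (measure_lt_top μ₁ B).ne)
    set g : X → ℝ := transfer d T f with hg
    have hgm : Measurable g := hTmeas f hfm
    have hg01 : ∀ x, g x ∈ Set.Icc (0:ℝ) 1 := transfer_mem_Icc hd hcard hf0 hf1
    have hgint : Integrable g μ := (hinv f hfint).1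
    have hgint1 : Integrable g μ₁ := (hinv1 f hfint1).1
    -- ∫ φ·g dμ = ∫ g dμ₁
    have e2 : ∫ x, φ x * g x ∂μ = ∫ x, g x ∂μ₁ := by
      simpa [smul_eq_mul] using integral_rnDeriv_smul hac (f := g)
    have e5 : ∫ x, φ x * f x ∂μ = ∫ x, f x ∂μ₁ := by
      simpa [smul_eq_mul] using integral_rnDeriv_smul hac (f := f)
    have e3 : ∫ x, g x ∂μ = ∫ x, f x ∂μ := (hinv f hfint).2
    have e4 : ∫ x, g x ∂μ₁ = ∫ x, f x ∂μ₁ := (hinv1 f hfint1).2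
    have hφg_int : Integrable (fun x => φ x * g x) μ :=
      hφint.bdd_mul (c := 1) hgm.aestronglyMeasurable (by
        filter_upwards with x
        rw [Real.norm_eq_abs, abs_le]
        exact ⟨by linarith [(hg01 x).1], (hg01 x).2⟩) |>.congr (by
          filter_upwards with x; ring)
    have hφf_int : Integrable (fun x => φ x * f x) μ :=
      hφint.bdd_mul (c := 1) hfm.aestronglyMeasurable (by
        filter_upwards with x
        rw [Real.norm_eq_abs, abs_le]
        exact ⟨by linarith [hf0 x], hf1 x⟩) |>.congr (by
          filter_upwards with x; ring)
    have lhs : ∫ x, g x * (1 - φ x) ∂μ = ∫ x, g x ∂μ - ∫ x, φ x * g x ∂μ := by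
      rw [← integral_sub hgint hφg_int]
      congr 1; funext x; ring
    have rhs : ∫ x, f x * (1 - φ x) ∂μ = ∫ x, f x ∂μ - ∫ x, φ x * f x ∂μ := by
      rw [← integral_sub hfint hφf_int]
      congr 1; funext x; ring
    rw [lhs, rhs, e2, e5, e3, e4]
  -- the two almost invariant sets
  have hw1m : Measurable (fun x => 1 - φ x) := measurable_const.sub hφm
  have hw1int : Integrable (fun x => 1 - φ x) μ := (integrable_const 1).sub hφint
  have hw2m : Measurable (fun x => φ x - 1) := hφm.sub measurable_const
  have hw2int : Integrable (fun x => φ x - 1) μ := hφint.sub (integrable_const 1)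
  have hB1 : AlmostInvariant μ T {x | 0 < 1 - φ x} := by
    refine key_almost_invariant μ hd hcard hTmeas hw1m hw1int ?_
    exact hId _ (measurableSet_lt measurable_const hw1m)
  have hB2 : AlmostInvariant μ T {x | 0 < φ x - 1} := by
    refine key_almost_invariant μ hd hcard hTmeas hw2m hw2int ?_
    have h := hId {x | 0 < φ x - 1} (measurableSet_lt measurable_const hw2m)
    have l1 : ∫ x, transfer d T (Set.indicator {x | 0 < φ x - 1} (1 : X → ℝ)) x * (φ x - 1) ∂μ
        = - ∫ x, transfer d T (Set.indicator {x | 0 < φ x - 1} (1 : X → ℝ)) x * (1 - φ x) ∂μ := by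
      rw [← integral_neg]; congr 1; funext x; ring
    have l2 : ∫ x, Set.indicator {x | 0 < φ x - 1} (1 : X → ℝ) x * (φ x - 1) ∂μ
        = - ∫ x, Set.indicator {x | 0 < φ x - 1} (1 : X → ℝ) x * (1 - φ x) ∂μ := by
      rw [← integral_neg]; congr 1; funext x; ring
    rw [l1, l2, h]
  have hB1m : MeasurableSet {x | 0 < 1 - φ x} := measurableSet_lt measurable_const hw1m
  have hB2m : MeasurableSet {x | 0 < φ x - 1} := measurableSet_lt measurable_const hw2m
  have hμne : (μ : Measure X) ≠ 0 := IsProbabilityMeasure.ne_zero μ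
  haveI : (ae μ).NeBot := ae_neBot.mpr hμne
  -- rule out full measure for a set where w > 0 a.e. but ∫ w = 0
  have hrule : ∀ w : X → ℝ, Integrable w μ → (∫ x, w x ∂μ = 0) →
      MeasurableSet {x | 0 < w x} → μ {x | 0 < w x} ≠ 1 := by
    intro w hwint hw0 hwm h1
    have hcompl : μ ({x | 0 < w x}ᶜ) = 0 := (prob_compl_eq_zero_iff hwm).mpr h1
    have haePos : ∀ᵐ x ∂μ, 0 < w x := hcompl
    have haeNonneg : 0 ≤ᵐ[μ] w := haePos.mono fun x hx => le_of_lt hx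
    have := (integral_eq_zero_iff_of_nonneg_ae haeNonneg hwint).mp hw0
    have hbad : ∀ᵐ x ∂μ, False := by
      filter_upwards [haePos, this] with x h1 h2
      rw [Pi.zero_apply] at h2
      exact absurd h2 (ne_of_gt h1)
    obtain ⟨x, hx⟩ := hbad.exists
    exact hx
  have hint1 : ∫ x, (1 - φ x) ∂μ = 0 := by
    rw [integral_sub (integrable_const 1) hφint, hφ_total]
    simp
  have hint2 : ∫ x, (φ x - 1) ∂μ = 0 := by
    rw [integral_sub hφint (integrable_const 1), hφ_total]
    simp
  have hμB1 : μ {x | 0 < 1 - φ x} = 0 := by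
    rcases herg _ hB1m hB1 with h | h
    · exact h
    · exact absurd h (hrule _ hw1int hint1 hB1m)
  have hμB2 : μ {x | 0 < φ x - 1} = 0 := by
    rcases herg _ hB2m hB2 with h | h
    · exact h
    · exact absurd h (hrule _ hw2int hint2 hB2m)
  -- φ = 1 a.e.
  have hφ1 : ∀ᵐ x ∂μ, φ x = 1 := by
    have h1 : ∀ᵐ x ∂μ, ¬ (0 < 1 - φ x) := by
      rw [ae_iff]; simpa using hμB1
    have h2 : ∀ᵐ x ∂μ, ¬ (0 < φ x - 1) := by
      rw [ae_iff]; simpa using hμB2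
    filter_upwards [h1, h2] with x hx1 hx2
    push_neg at hx1 hx2
    linarith
  -- hence μ₁ = μ
  have hρ1 : ρ =ᵐ[μ] fun _ => (1 : ENNReal) := by
    filter_upwards [hφ1, Measure.rnDeriv_lt_top μ₁ μ] with x h1 h2
    exact (ENNReal.toReal_eq_one_iff (ρ x)).mp h1
  have hμ1 : μ₁ = μ := by
    have h := Measure.withDensity_rnDeriv_eq μ₁ μ hac
    rw [← h, withDensity_congr_ae hρ1]
    exact withDensity_one
  -- hence μ₂ = μ
  have hμ2 : μ₂ = μ := by
    ext s hs
    have happ : μ s = lam * μ s + (1 - lam) * μ₂ s := by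
      nth_rw 1 [heq, hμ1]
      simp [Measure.coe_add, Measure.coe_smul]
    have hsplit : μ s = lam * μ s + (1 - lam) * μ s := by
      rw [← add_mul, add_tsub_cancel_of_le hl1.le, one_mul]
    have hfin : lam * μ s ≠ ⊤ :=
      ENNReal.mul_ne_top hl1.ne_top (measure_ne_top μ s)
    have hcanc : (1 - lam) * μ₂ s = (1 - lam) * μ s := by
      have := happ.symm.trans hsplit
      exact (ENNReal.add_right_inj hfin).mp this
    have hlne : (1 : ENNReal) - lam ≠ 0 := by
      simp [tsub_eq_zero_iff_le, not_le, hl1]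
    have hlnt : (1 : ENNReal) - lam ≠ ⊤ := by
      exact ne_top_of_le_ne_top ENNReal.one_ne_top tsub_le_self
    exact ((ENNReal.mul_right_inj hlne hlnt).mp hcanc)
  exact hne (hμ1.trans hμ2.symm)
end

section
/- Let (X, μ) be a probability space with a d-valued measurable correspondence T and U-invariant measure μ, where Uφ(x) = (1/d)Σ'_{y∈T(x)}φ(y). Suppose φ ∈ L¹(μ) is real-valued and satisfies Uφ(x) = φ(x) for μ-almost every x. Then for every t ∈ ℝ, the superlevel set {x ∈ X : φ(x) > t} and the sublevel set {x ∈ X : φ(x) < t} are almost invariant with respect to T and μ. -/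
open MeasureTheory Filter Topology

/-- If `φ ∈ L¹(μ)` is real valued and `Uφ = φ` `μ`-a.e., then for every
`t ∈ ℝ` the superlevel set `{φ > t}` and the sublevel set `{φ < t}` are almost
invariant with respect to `T` and `μ`. -/
theorem level_sets_almostInvariant
    {X : Type*} [MeasurableSpace X] (μ : Measure X) [IsProbabilityMeasure μ]
    (d : ℕ) (hd : 1 ≤ d) (T : X → Multiset X)
    (hcard : ∀ x, Multiset.card (T x) = d)
    (hTmeas : MeasCorr d T)
    (hinv : UInvariant μ d T)
    (φ : X → ℝ) (hφ : Integrable φ μ)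
    (hfix : ∀ᵐ x ∂μ, transfer d T φ x = φ x) :
    ∀ t : ℝ, AlmostInvariant μ T {x | t < φ x} ∧ AlmostInvariant μ T {x | φ x < t} := by

  have hd0 : (d : ℝ) ≠ 0 := Nat.cast_ne_zero.mpr (by omega)
  have hconst : ∀ (c : ℝ) (x : X), transfer d T (fun _ => c) x = c := by
    intro c x
    simp only [transfer, Multiset.map_const', Multiset.sum_replicate, hcard x, smul_eq_mul,
      nsmul_eq_mul, ← mul_assoc, inv_mul_cancel₀ hd0, one_mul]
  have hmono : ∀ (f g : X → ℝ), (∀ y, f y ≤ g y) → ∀ x, transfer d T f x ≤ transfer d T g x := by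
    intro f g h x
    simp only [transfer, smul_eq_mul]
    exact mul_le_mul_of_nonneg_left (Multiset.sum_map_le_sum_map f g (fun i _ => h i))
      (by positivity)
  -- a.e. fixed point of the truncation at every rational level
  have hmax_fix : ∀ s : ℚ, ∀ᵐ x ∂μ, transfer d T (fun y => max (φ y) (s : ℝ)) x
      = max (φ x) (s : ℝ) := by
    intro s
    set ψ : X → ℝ := fun y => max (φ y) (s : ℝ) with hψ
    have hψint : Integrable ψ μ := by
      have := hφ.sup (integrable_const (s : ℝ) (μ := μ))
      exact this.congr (by filter_upwards with x; rfl)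
    obtain ⟨hUint, hUeq⟩ := hinv ψ hψint
    have hle : ∀ᵐ x ∂μ, ψ x ≤ transfer d T ψ x := by
      filter_upwards [hfix] with x hx
      have h1 : transfer d T φ x ≤ transfer d T ψ x :=
        hmono _ _ (fun y => le_max_left _ _) x
      have h2 : (s : ℝ) ≤ transfer d T ψ x := by
        have := hmono (fun _ => (s : ℝ)) ψ (fun y => le_max_right _ _) x
        rwa [hconst] at this
      exact max_le (hx ▸ h1) h2
    have hsub : Integrable (fun x => transfer d T ψ x - ψ x) μ := hUint.sub hψint
    have hzero : ∫ x, (transfer d T ψ x - ψ x) ∂μ = 0 := by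
      rw [integral_sub hUint hψint, hUeq, sub_self]
    have := (integral_eq_zero_iff_of_nonneg_ae
      (by filter_upwards [hle] with x hx; simpa using hx) hsub).mp hzero
    filter_upwards [this] with x hx
    have : transfer d T ψ x - ψ x = 0 := hx
    linarith
  -- the full measure set of good points
  have hall : ∀ᵐ x ∂μ, (∀ s : ℚ, transfer d T (fun y => max (φ y) (s : ℝ)) x
      = max (φ x) (s : ℝ)) ∧ transfer d T φ x = φ x :=
    ((ae_all_iff).mpr hmax_fix).and hfix
  set P : X → Prop := fun x => (∀ s : ℚ, transfer d T (fun y => max (φ y) (s : ℝ)) x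
      = max (φ x) (s : ℝ)) ∧ transfer d T φ x = φ x with hP
  have hnull : μ {x | ¬ P x} = 0 := ae_iff.mp hall
  set N : Set X := toMeasurable μ {x | ¬ P x} with hN
  have hNmeas : MeasurableSet N := measurableSet_toMeasurable _ _
  have hNnull : μ N = 0 := by rw [hN, measure_toMeasurable]; exact hnull
  have hPgood : ∀ x, x ∉ N → P x := by
    intro x hx
    by_contra h
    exact hx (subset_toMeasurable _ _ h)
  -- key pointwise claims
  have claim_sup : ∀ t : ℝ, ∀ x, P x → t < φ x → ∀ y ∈ T x, t < φ y := by
    intro t x hx ht y hy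
    obtain ⟨s, hs1, hs2⟩ := exists_rat_btwn ht
    by_contra hly
    push_neg at hly
    have heq : transfer d T (fun y => max (φ y) (s : ℝ)) x = transfer d T φ x := by
      rw [hx.1 s, hx.2, max_eq_left hs2.le]
    have hsum : ((T x).map φ).sum < ((T x).map (fun y => max (φ y) (s : ℝ))).sum :=
      Multiset.sum_lt_sum (fun i _ => le_max_left _ _)
        ⟨y, hy, lt_max_of_lt_right (lt_of_le_of_lt hly hs1)⟩
    have : transfer d T φ x < transfer d T (fun y => max (φ y) (s : ℝ)) x := by
      simp only [transfer, smul_eq_mul]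
      exact mul_lt_mul_of_pos_left hsum (by positivity)
    rw [heq] at this
    exact lt_irrefl _ this
  have claim_sub : ∀ t : ℝ, ∀ x, P x → φ x < t → ∀ y ∈ T x, φ y < t := by
    intro t x hx ht y hy
    obtain ⟨s, hs1, hs2⟩ := exists_rat_btwn ht
    by_contra hly
    push_neg at hly
    have heq : transfer d T (fun y => max (φ y) (s : ℝ)) x
        = transfer d T (fun _ => (s : ℝ)) x := by
      rw [hx.1 s, hconst, max_eq_right hs1.le]
    have hsum : ((T x).map (fun _ => (s : ℝ))).sum
        < ((T x).map (fun y => max (φ y) (s : ℝ))).sum :=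
      Multiset.sum_lt_sum (fun i _ => le_max_right _ _)
        ⟨y, hy, lt_max_of_lt_left (lt_of_lt_of_le hs2 hly)⟩
    have : transfer d T (fun _ => (s : ℝ)) x
        < transfer d T (fun y => max (φ y) (s : ℝ)) x := by
      simp only [transfer, smul_eq_mul]
      exact mul_lt_mul_of_pos_left hsum (by positivity)
    rw [heq] at this
    exact lt_irrefl _ this
  -- measurable mate of φ
  obtain ⟨g, hgmeas, hφg⟩ := hφ.1
  set N₂ : Set X := toMeasurable μ {x | φ x ≠ g x} with hN₂
  have hN₂meas : MeasurableSet N₂ := measurableSet_toMeasurable _ _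
  have hN₂null : μ N₂ = 0 := by
    rw [hN₂, measure_toMeasurable]
    exact ae_iff.mp hφg
  have hgood : ∀ x, x ∉ N₂ → φ x = g x := by
    intro x hx
    by_contra h
    exact hx (subset_toMeasurable _ _ h)
  have hUnull : μ (N ∪ N₂) = 0 :=
    le_antisymm (le_trans (measure_union_le _ _) (by rw [hNnull, hN₂null, add_zero])) zero_le
  intro t
  constructor
  · refine ⟨{x | t < g x} ∩ (N ∪ N₂)ᶜ, ?_, ?_, ?_, ?_⟩
    · exact (measurableSet_lt measurable_const hgmeas.measurable).inter
        (hNmeas.union hN₂meas).compl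
    · rintro x ⟨hx1, hx2⟩
      have : φ x = g x := hgood x (fun h => hx2 (Or.inr h))
      simpa [this] using hx1
    · rintro x ⟨hx1, hx2⟩ y hy
      have hxP : P x := hPgood x (fun h => hx2 (Or.inl h))
      have : φ x = g x := hgood x (fun h => hx2 (Or.inr h))
      exact claim_sup t x hxP (this ▸ hx1) y hy
    · refine le_antisymm (measure_mono ?_) ?_
      · rintro x ⟨hx1, hx2⟩
        have : φ x = g x := hgood x (fun h => hx2 (Or.inr h))
        simpa [this] using hx1
      · calc μ {x | t < φ x} ≤ μ (({x | t < g x} ∩ (N ∪ N₂)ᶜ) ∪ (N ∪ N₂)) := by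
              apply measure_mono
              intro x hx
              by_cases h : x ∈ N ∪ N₂
              · exact Or.inr h
              · exact Or.inl ⟨by
                  have : φ x = g x := hgood x (fun h' => h (Or.inr h'))
                  simpa [← this] using hx, h⟩
          _ ≤ μ ({x | t < g x} ∩ (N ∪ N₂)ᶜ) + μ (N ∪ N₂) := measure_union_le _ _
          _ = μ ({x | t < g x} ∩ (N ∪ N₂)ᶜ) := by rw [hUnull, add_zero]
  · refine ⟨{x | g x < t} ∩ (N ∪ N₂)ᶜ, ?_, ?_, ?_, ?_⟩
    · exact (measurableSet_lt hgmeas.measurable measurable_const).inter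
        (hNmeas.union hN₂meas).compl
    · rintro x ⟨hx1, hx2⟩
      have : φ x = g x := hgood x (fun h => hx2 (Or.inr h))
      simpa [this] using hx1
    · rintro x ⟨hx1, hx2⟩ y hy
      have hxP : P x := hPgood x (fun h => hx2 (Or.inl h))
      have : φ x = g x := hgood x (fun h => hx2 (Or.inr h))
      exact claim_sub t x hxP (this ▸ hx1) y hy
    · refine le_antisymm (measure_mono ?_) ?_
      · rintro x ⟨hx1, hx2⟩
        have : φ x = g x := hgood x (fun h => hx2 (Or.inr h))
        simpa [this] using hx1
      · calc μ {x | φ x < t} ≤ μ (({x | g x < t} ∩ (N ∪ N₂)ᶜ) ∪ (N ∪ N₂)) := by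
              apply measure_mono
              intro x hx
              by_cases h : x ∈ N ∪ N₂
              · exact Or.inr h
              · exact Or.inl ⟨by
                  have : φ x = g x := hgood x (fun h' => h (Or.inr h'))
                  simpa [← this] using hx, h⟩
          _ ≤ μ ({x | g x < t} ∩ (N ∪ N₂)ᶜ) + μ (N ∪ N₂) := measure_union_le _ _
          _ = μ ({x | g x < t} ∩ (N ∪ N₂)ᶜ) := by rw [hUnull, add_zero]
end

section
/- Let (X, μ) be a probability space with a d-valued measurable correspondence T and U-invariant measure μ. Then μ is ergodic (every almost invariant Borel set has measure 0 or 1) if and only if every φ ∈ L¹(μ) satisfying Uφ = φ μ-almost everywhere is μ-almost everywhere equal to a constant. -/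
open MeasureTheory Filter Topology

section auxiliary

variable {X : Type*} {d : ℕ} {T : X → Multiset X}

lemma transfer_const' (hd : 1 ≤ d) (hcard : ∀ x, Multiset.card (T x) = d)
    (c : ℝ) (x : X) : transfer d T (fun _ => c) x = c := by
  simp only [transfer, Multiset.map_const', Multiset.sum_replicate, hcard x, smul_eq_mul,
    nsmul_eq_mul]
  have : (d : ℝ) ≠ 0 := by positivity
  field_simp

lemma transfer_nonneg' {f : X → ℝ} (hf : ∀ y, 0 ≤ f y) (x : X) : 0 ≤ transfer d T f x := by
  apply smul_nonneg (by positivity)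
  exact Multiset.sum_nonneg (by simpa using fun y _ => hf y)

lemma transfer_mono' {f g : X → ℝ} (h : ∀ y, f y ≤ g y) (x : X) :
    transfer d T f x ≤ transfer d T g x := by
  apply smul_le_smul_of_nonneg_left _ (by positivity)
  exact Multiset.sum_map_le_sum_map f g fun i _ => h i

lemma transfer_sub_const' (hd : 1 ≤ d) (hcard : ∀ x, Multiset.card (T x) = d)
    (f : X → ℝ) (t : ℝ) (x : X) :
    transfer d T (fun y => f y - t) x = transfer d T f x - t := by
  have h := transfer_const' (T := T) hd hcard t x
  simp only [transfer, smul_eq_mul] at *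
  rw [Multiset.sum_map_sub, mul_sub, h]

lemma eq_zero_of_transfer_eq_zero' (hd : 1 ≤ d) {f : X → ℝ} (hf : ∀ y, 0 ≤ f y) {x : X}
    (hx : transfer d T f x = 0) : ∀ y ∈ T x, f y = 0 := by
  intro y hy
  have hdne : ((d : ℝ))⁻¹ ≠ 0 := by positivity
  have hsum : ((T x).map f).sum = 0 := by
    simp only [transfer, smul_eq_mul] at hx
    exact (mul_eq_zero.mp hx).resolve_left hdne
  have h1 : f y ≤ ((T x).map f).sum :=
    Multiset.single_le_sum (by simpa using fun z _ => hf z) _ (Multiset.mem_map_of_mem f hy)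
  exact le_antisymm (hsum ▸ h1) (hf y)

end auxiliary

section auxiliary2

variable {X : Type*} [MeasurableSpace X] {μ : Measure X} [IsProbabilityMeasure μ]
  {d : ℕ} {T : X → Multiset X}

lemma ae_notin_null' (hd : 1 ≤ d) (hinv : UInvariant μ d T)
    {N : Set X} (hN : MeasurableSet N) (h0 : μ N = 0) :
    ∀ᵐ x ∂μ, ∀ y ∈ T x, y ∉ N := by
  set f : X → ℝ := N.indicator 1 with hf
  have hfnn : ∀ y, 0 ≤ f y := fun y => Set.indicator_nonneg (fun _ _ => zero_le_one) y
  have hfint : Integrable f μ := by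
    rw [hf, integrable_indicator_iff hN]
    exact (integrableOn_const_iff (C := (1:ℝ))).mpr (Or.inr (by rw [h0]; exact ENNReal.zero_lt_top))
  have hint0 : ∫ x, f x ∂μ = 0 := by
    rw [hf, integral_indicator hN]
    simp [Measure.restrict_eq_zero.mpr h0]
  obtain ⟨hTint, hTeq⟩ := hinv f hfint
  have hzero : (fun x => transfer d T f x) =ᵐ[μ] 0 := by
    rw [← integral_eq_zero_iff_of_nonneg_ae
      (Eventually.of_forall fun x => transfer_nonneg' hfnn x) hTint, hTeq, hint0]
  filter_upwards [hzero] with x hx y hy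
  have h := eq_zero_of_transfer_eq_zero' hd hfnn hx y hy
  intro hyn
  simp [hf, Set.indicator_of_mem hyn] at h

lemma ae_transport' (hd : 1 ≤ d) (hinv : UInvariant μ d T)
    {p : X → Prop} (hp : ∀ᵐ y ∂μ, p y) : ∀ᵐ x ∂μ, ∀ y ∈ T x, p y := by
  obtain ⟨N, hsub, hNm, hN0⟩ := exists_measurable_superset_of_null (ae_iff.mp hp)
  filter_upwards [ae_notin_null' hd hinv hNm hN0] with x hx y hy
  by_contra hpy
  exact hx y hy (hsub hpy)

lemma superlevel_dichotomy' (hd : 1 ≤ d) (hcard : ∀ x, Multiset.card (T x) = d)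
    (hTmeas : MeasCorr d T) (hinv : UInvariant μ d T) (herg : ErgodicCorr μ T)
    {ψ : X → ℝ} (hmeas : Measurable ψ) (hint : Integrable ψ μ)
    (hfix : ∀ᵐ x ∂μ, transfer d T ψ x = ψ x) (t : ℝ) :
    μ {x | ψ x ≤ t} = 0 ∨ μ {x | ψ x ≤ t} = 1 := by
  set g : X → ℝ := fun x => max (ψ x - t) 0 with hg
  have gnn : ∀ y, 0 ≤ g y := fun y => le_max_right _ _
  have gmeas : Measurable g := (hmeas.sub measurable_const).max measurable_const
  have gint : Integrable g μ := (hint.sub (integrable_const t)).pos_part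
  have hge : ∀ᵐ x ∂μ, g x ≤ transfer d T g x := by
    filter_upwards [hfix] with x hx
    have h1 : transfer d T ψ x - t ≤ transfer d T g x := by
      rw [← transfer_sub_const' hd hcard ψ t x]
      exact transfer_mono' (fun y => le_max_left _ _) x
    have h2 : 0 ≤ transfer d T g x := transfer_nonneg' gnn x
    rw [hx] at h1
    exact max_le h1 h2
  obtain ⟨hTint, hTeq⟩ := hinv g gint
  have hEq : ∀ᵐ x ∂μ, transfer d T g x = g x := by
    have hnn : 0 ≤ᵐ[μ] fun x => transfer d T g x - g x := by
      filter_upwards [hge] with x hx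
      simpa using hx
    have hi : Integrable (fun x => transfer d T g x - g x) μ := hTint.sub gint
    have h0 : ∫ x, (transfer d T g x - g x) ∂μ = 0 := by
      rw [integral_sub hTint gint, hTeq, sub_self]
    have h1 := (integral_eq_zero_iff_of_nonneg_ae hnn hi).mp h0
    filter_upwards [h1] with x hx
    have : transfer d T g x - g x = 0 := hx
    linarith
  set B : Set X := {x | ψ x ≤ t} with hBdef
  have hB : MeasurableSet B := measurableSet_le hmeas measurable_const
  apply herg B hB
  set E : Set X := {x | transfer d T g x = g x} with hEdef
  have hE : MeasurableSet E := measurableSet_eq_fun (hTmeas g gmeas) gmeas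
  have hEc : μ Eᶜ = 0 := by
    have : {x | ¬ transfer d T g x = g x} = Eᶜ := rfl
    rw [← this]
    exact ae_iff.mp hEq
  refine ⟨B ∩ E, hB.inter hE, Set.inter_subset_left, ?_, measure_inter_conull hEc⟩
  rintro x ⟨hxB, hxE⟩ y hy
  have hgx : g x = 0 := max_eq_right (by simpa [hBdef] using hxB)
  have htr0 : transfer d T g x = 0 := by
    have : transfer d T g x = g x := hxE
    rw [this, hgx]
  have hg0 := eq_zero_of_transfer_eq_zero' hd gnn htr0 y hy
  have h2 : ψ y - t ≤ 0 := by
    have := le_max_left (ψ y - t) 0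
    rw [show max (ψ y - t) 0 = g y from rfl, hg0] at this
    exact this
  show ψ y ≤ t
  linarith

lemma dichotomy_const' {ψ : X → ℝ}
    (hdich : ∀ t : ℝ, μ {x | ψ x ≤ t} = 0 ∨ μ {x | ψ x ≤ t} = 1)
    (hmeas : Measurable ψ) :
    ∃ c : ℝ, ∀ᵐ x ∂μ, ψ x = c := by
  set S : Set ℝ := {t | μ {x | ψ x ≤ t} = 1} with hS
  have hmono : ∀ {s t : ℝ}, s ≤ t → s ∈ S → t ∈ S := by
    intro s t hst hs
    have h1 : μ {x | ψ x ≤ s} ≤ μ {x | ψ x ≤ t} :=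
      measure_mono (fun x hx => le_trans hx hst)
    have h2 : μ {x | ψ x ≤ t} ≤ 1 := prob_le_one
    have h3 : μ {x | ψ x ≤ s} = 1 := hs
    exact le_antisymm h2 (h3 ▸ h1)
  have hne : S.Nonempty := by
    by_contra h
    rw [Set.not_nonempty_iff_eq_empty] at h
    have h0 : ∀ n : ℕ, μ {x | ψ x ≤ (n : ℝ)} = 0 := by
      intro n
      refine (hdich n).resolve_right fun h1 => ?_
      have : (n : ℝ) ∈ S := h1
      simp [h] at this
    have hU : μ (⋃ n : ℕ, {x | ψ x ≤ (n : ℝ)}) = 0 := measure_iUnion_null h0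
    have huniv : (⋃ n : ℕ, {x | ψ x ≤ (n : ℝ)}) = Set.univ := by
      ext x
      simp only [Set.mem_iUnion, Set.mem_setOf_eq, Set.mem_univ, iff_true]
      exact exists_nat_ge (ψ x)
    rw [huniv, measure_univ] at hU
    exact one_ne_zero hU
  have hbdd : BddBelow S := by
    by_contra h
    rw [not_bddBelow_iff] at h
    have hmem : ∀ m : ℕ, (-(m : ℝ)) ∈ S := by
      intro m
      obtain ⟨t, htS, htlt⟩ := h (-(m : ℝ))
      exact hmono htlt.le htS
    have hcompl : ∀ m : ℕ, μ {x | ψ x ≤ -(m : ℝ)}ᶜ = 0 := by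
      intro m
      exact (prob_compl_eq_zero_iff (measurableSet_le hmeas measurable_const)).mpr (hmem m)
    have hU : μ (⋃ m : ℕ, {x | ψ x ≤ -(m : ℝ)}ᶜ) = 0 := measure_iUnion_null hcompl
    have huniv : (⋃ m : ℕ, {x | ψ x ≤ -(m : ℝ)}ᶜ) = Set.univ := by
      ext x
      simp only [Set.mem_iUnion, Set.mem_compl_iff, Set.mem_setOf_eq, not_le, Set.mem_univ,
        iff_true]
      obtain ⟨m, hm⟩ := exists_nat_gt (-(ψ x))
      exact ⟨m, by linarith⟩
    rw [huniv, measure_univ] at hU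
    exact one_ne_zero hU
  set c := sInf S with hc
  refine ⟨c, ?_⟩
  have hub : ∀ᵐ x ∂μ, ψ x ≤ c := by
    have h1 : ∀ n : ℕ, μ {x | ψ x ≤ c + 1 / ((n : ℝ) + 1)}ᶜ = 0 := by
      intro n
      have hpos : c < c + 1 / ((n : ℝ) + 1) := by
        have : (0 : ℝ) < 1 / ((n : ℝ) + 1) := by positivity
        linarith
      obtain ⟨s, hsS, hs⟩ := exists_lt_of_csInf_lt hne hpos
      have hmemS : (c + 1 / ((n : ℝ) + 1)) ∈ S := hmono hs.le hsS
      exact (prob_compl_eq_zero_iff (measurableSet_le hmeas measurable_const)).mpr hmemS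
    rw [ae_iff]
    apply measure_mono_null _ (measure_iUnion_null h1)
    intro x hx
    simp only [Set.mem_setOf_eq, not_le] at hx
    simp only [Set.mem_iUnion, Set.mem_compl_iff, Set.mem_setOf_eq, not_le]
    obtain ⟨n, hn⟩ := exists_nat_one_div_lt (show (0 : ℝ) < ψ x - c by linarith)
    exact ⟨n, by linarith⟩
  have hlb : ∀ᵐ x ∂μ, ¬ ψ x < c := by
    have h1 : ∀ n : ℕ, μ {x | ψ x ≤ c - 1 / ((n : ℝ) + 1)} = 0 := by
      intro n
      refine (hdich _).resolve_right fun h2 => ?_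
      have hle : c ≤ c - 1 / ((n : ℝ) + 1) := csInf_le hbdd h2
      have : (0 : ℝ) < 1 / ((n : ℝ) + 1) := by positivity
      linarith
    rw [ae_iff]
    apply measure_mono_null _ (measure_iUnion_null h1)
    intro x hx
    simp only [Set.mem_setOf_eq, not_not] at hx
    simp only [Set.mem_iUnion, Set.mem_setOf_eq]
    obtain ⟨n, hn⟩ := exists_nat_one_div_lt (show (0 : ℝ) < c - ψ x by linarith)
    exact ⟨n, by linarith⟩
  filter_upwards [hub, hlb] with x h1 h2
  exact le_antisymm h1 (not_lt.mp h2)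

lemma real_invariant_const' (hd : 1 ≤ d) (hcard : ∀ x, Multiset.card (T x) = d)
    (hTmeas : MeasCorr d T) (hinv : UInvariant μ d T) (herg : ErgodicCorr μ T)
    {ψ : X → ℝ} (hmeas : Measurable ψ) (hint : Integrable ψ μ)
    (hfix : ∀ᵐ x ∂μ, transfer d T ψ x = ψ x) :
    ∃ c : ℝ, ∀ᵐ x ∂μ, ψ x = c :=
  dichotomy_const' (superlevel_dichotomy' hd hcard hTmeas hinv herg hmeas hint hfix) hmeas

end auxiliary2

/-- A `U`-invariant probability measure `μ` is ergodic if and only if every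
(complex-valued) `φ ∈ L¹(μ)` with `Uφ = φ` `μ`-a.e. is `μ`-a.e. constant. -/
theorem ergodic_iff_invariant_functions_const
    {X : Type*} [MeasurableSpace X] (μ : Measure X) [IsProbabilityMeasure μ]
    (d : ℕ) (hd : 1 ≤ d) (T : X → Multiset X)
    (hcard : ∀ x, Multiset.card (T x) = d)
    (hTmeas : MeasCorr d T)
    (hinv : UInvariant μ d T) :
    ErgodicCorr μ T ↔
      ∀ φ : X → ℂ, Integrable φ μ → (∀ᵐ x ∂μ, transfer d T φ x = φ x) →
        ∃ c : ℂ, ∀ᵐ x ∂μ, φ x = c := by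
  constructor
  · -- ergodic → invariant functions constant
    intro herg φ hφint hφfix
    obtain ⟨φ₀, hsm, hae⟩ := hφint.1
    have hmeas0 : Measurable φ₀ := hsm.measurable
    -- transfer φ = transfer φ₀ a.e.
    have h1 : ∀ᵐ x ∂μ, ∀ y ∈ T x, φ y = φ₀ y := ae_transport' hd hinv hae
    have h2 : ∀ᵐ x ∂μ, transfer d T φ x = transfer d T φ₀ x := by
      filter_upwards [h1] with x hx
      simp only [transfer]
      congr 1
      exact congrArg Multiset.sum (Multiset.map_congr rfl hx)
    have hfix0 : ∀ᵐ x ∂μ, transfer d T φ₀ x = φ₀ x := by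
      filter_upwards [h2, hφfix, hae] with x ha hb hc
      rw [← ha, hb, hc]
    -- real part
    set ψre : X → ℝ := fun x => (φ₀ x).re with hre
    set ψim : X → ℝ := fun x => (φ₀ x).im with him
    have hcomm_re : ∀ x, transfer d T ψre x = (transfer d T φ₀ x).re := by
      intro x
      simp only [transfer, Complex.smul_re, smul_eq_mul]
      congr 1
      have h := map_multiset_sum Complex.reCLM ((T x).map φ₀)
      rw [Multiset.map_map] at h
      exact h.symm
    have hcomm_im : ∀ x, transfer d T ψim x = (transfer d T φ₀ x).im := by
      intro x
      simp only [transfer, Complex.smul_im, smul_eq_mul]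
      congr 1
      have h := map_multiset_sum Complex.imCLM ((T x).map φ₀)
      rw [Multiset.map_map] at h
      exact h.symm
    have hint_re : Integrable ψre μ := by
      refine hφint.re.congr ?_
      filter_upwards [hae] with x hx
      simp [hre, hx, RCLike.re_to_complex]
    have hint_im : Integrable ψim μ := by
      refine hφint.im.congr ?_
      filter_upwards [hae] with x hx
      simp [him, hx, RCLike.im_to_complex]
    have hfix_re : ∀ᵐ x ∂μ, transfer d T ψre x = ψre x := by
      filter_upwards [hfix0] with x hx
      rw [hcomm_re x, hx]
    have hfix_im : ∀ᵐ x ∂μ, transfer d T ψim x = ψim x := by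
      filter_upwards [hfix0] with x hx
      rw [hcomm_im x, hx]
    obtain ⟨a, ha⟩ := real_invariant_const' hd hcard hTmeas hinv herg
      (Complex.measurable_re.comp hmeas0) hint_re hfix_re
    obtain ⟨b, hb⟩ := real_invariant_const' hd hcard hTmeas hinv herg
      (Complex.measurable_im.comp hmeas0) hint_im hfix_im
    refine ⟨⟨a, b⟩, ?_⟩
    filter_upwards [hae, ha, hb] with x h1 h2 h3
    rw [h1]
    exact Complex.ext h2 h3
  · -- invariant functions constant → ergodic
    intro hconst B hB hAI
    obtain ⟨B', hB', hsub, hmapsto, hμ⟩ := hAI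
    set f : X → ℝ := B.indicator 1 with hf
    set f' : X → ℝ := B'.indicator 1 with hf'
    have hfnn : ∀ y, 0 ≤ f y := fun y => Set.indicator_nonneg (fun _ _ => zero_le_one) y
    have hfmeas : Measurable f := measurable_one.indicator hB
    have hf'meas : Measurable f' := measurable_one.indicator hB'
    have hfint : Integrable f μ := by
      rw [hf, integrable_indicator_iff hB]
      exact (integrableOn_const_iff (C := (1:ℝ))).mpr (Or.inr (measure_lt_top μ B))
    have hμdiff : μ (B \ B') = 0 := by
      rw [measure_diff hsub hB'.nullMeasurableSet (measure_ne_top μ B'), hμ, tsub_self]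
    have hf'f : f' =ᵐ[μ] f := by
      rw [Filter.EventuallyEq, ae_iff]
      apply measure_mono_null _ hμdiff
      intro x hx
      simp only [Set.mem_setOf_eq] at hx
      by_cases h1 : x ∈ B'
      · exfalso; apply hx
        simp [hf, hf', Set.indicator_of_mem h1, Set.indicator_of_mem (hsub h1)]
      · by_cases h2 : x ∈ B
        · exact ⟨h2, h1⟩
        · exfalso; apply hx
          simp [hf, hf', Set.indicator_of_notMem h1, Set.indicator_of_notMem h2]
    have hf'int : Integrable f' μ := hfint.congr hf'f.symm
    -- pointwise f' ≤ transfer f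
    have hptwise : ∀ x, f' x ≤ transfer d T f x := by
      intro x
      by_cases hx : x ∈ B'
      · have hval : ∀ y ∈ T x, f y = (fun _ => (1 : ℝ)) y := by
          intro y hy
          simp [hf, Set.indicator_of_mem (hmapsto x hx y hy)]
        have : transfer d T f x = 1 := by
          have hmapeq : (T x).map f = (T x).map (fun _ => (1 : ℝ)) :=
            Multiset.map_congr rfl hval
          show (d : ℝ)⁻¹ • ((T x).map f).sum = 1
          rw [hmapeq]
          exact transfer_const' hd hcard 1 x
        rw [this, hf', Set.indicator_of_mem hx]
        norm_num
      · rw [hf', Set.indicator_of_notMem hx]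
        exact transfer_nonneg' hfnn x
    obtain ⟨hTint, hTeq⟩ := hinv f hfint
    have hEq : ∀ᵐ x ∂μ, transfer d T f x = f' x := by
      have hnn : 0 ≤ᵐ[μ] fun x => transfer d T f x - f' x :=
        Eventually.of_forall fun x => by simpa using hptwise x
      have hi : Integrable (fun x => transfer d T f x - f' x) μ := hTint.sub hf'int
      have h0 : ∫ x, (transfer d T f x - f' x) ∂μ = 0 := by
        rw [integral_sub hTint hf'int, hTeq, integral_congr_ae hf'f, sub_self]
      have h1 := (integral_eq_zero_iff_of_nonneg_ae hnn hi).mp h0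
      filter_upwards [h1] with x hx
      have : transfer d T f x - f' x = 0 := hx
      linarith
    have hfixf : ∀ᵐ x ∂μ, transfer d T f x = f x := by
      filter_upwards [hEq, hf'f] with x h1 h2
      rw [h1, h2]
    -- pass to complex
    set φc : X → ℂ := fun x => ((f x : ℝ) : ℂ) with hφc
    have hφcint : Integrable φc μ := hfint.ofReal
    have hcomm : ∀ x, transfer d T φc x = ((transfer d T f x : ℝ) : ℂ) := by
      intro x
      simp only [transfer]
      have h := map_multiset_sum Complex.ofRealCLM ((T x).map f)
      rw [Multiset.map_map] at h
      have hmap : (T x).map φc = (T x).map (⇑Complex.ofRealCLM ∘ f) := rfl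
      rw [hmap, ← h]
      simp [Complex.real_smul, Complex.ofReal_mul]
    have hφcfix : ∀ᵐ x ∂μ, transfer d T φc x = φc x := by
      filter_upwards [hfixf] with x hx
      rw [hcomm x, hx]
    obtain ⟨c, hc⟩ := hconst φc hφcint hφcfix
    by_cases hc1 : c = 1
    · right
      rw [← prob_compl_eq_zero_iff hB]
      apply measure_mono_null _ (ae_iff.mp hc)
      intro x hx
      simp only [Set.mem_compl_iff] at hx
      simp only [Set.mem_setOf_eq, hc1]
      rw [hφc]
      simp [hf, Set.indicator_of_notMem hx]
    · left
      apply measure_mono_null _ (ae_iff.mp hc)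
      intro x hx
      simp only [Set.mem_setOf_eq]
      rw [hφc]
      simp [hf, Set.indicator_of_mem hx]
      exact fun h => hc1 h.symm
end

section
/- Let (X, μ) be a probability space with a d-valued measurable correspondence T and U-invariant measure μ. Let φ ∈ L¹(μ) be real-valued and define E_α = {x ∈ X : sup_{n≥1} (1/n) Σ_{j=0}^{n−1} U^jφ(x) > α}. If A is an almost invariant Borel set with respect to T and μ, then ∫_{E_α ∩ A} φ dμ ≥ α · μ(E_α ∩ A). -/
open MeasureTheory Filter Topology

namespace MaxErgAux

variable {X : Type*} {d : ℕ} {T : X → Multiset X}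

lemma transfer_add (f g : X → ℝ) (x : X) :
    transfer d T (fun y => f y + g y) x = transfer d T f x + transfer d T g x := by
  simp [transfer, Multiset.sum_map_add, smul_eq_mul, mul_add]

lemma transfer_neg (f : X → ℝ) (x : X) :
    transfer d T (fun y => -f y) x = -transfer d T f x := by
  simp [transfer, Multiset.sum_map_neg']

lemma transfer_mono {f g : X → ℝ} (h : ∀ y, f y ≤ g y) (x : X) :
    transfer d T f x ≤ transfer d T g x := by
  unfold transfer
  have : ((T x).map f).sum ≤ ((T x).map g).sum :=
    Multiset.sum_map_le_sum_map f g (fun i _ => h i)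
  have hd : (0:ℝ) ≤ (d : ℝ)⁻¹ := by positivity
  simpa [smul_eq_mul] using mul_le_mul_of_nonneg_left this hd

lemma transfer_nonneg {f : X → ℝ} (h : ∀ y, 0 ≤ f y) (x : X) :
    0 ≤ transfer d T f x := by
  have := transfer_mono (f := fun _ => (0:ℝ)) (g := f) (T := T) (d := d) h x
  simpa [transfer] using this

lemma transfer_const (hcard : ∀ x, Multiset.card (T x) = d) (hd : 1 ≤ d) (c : ℝ) (x : X) :
    transfer d T (fun _ => c) x = c := by
  have hd0 : (d:ℝ) ≠ 0 := by positivity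
  simp [transfer, Multiset.map_const', hcard x, smul_eq_mul, Multiset.sum_replicate,
    nsmul_eq_mul, ← mul_assoc, inv_mul_cancel₀ hd0]

lemma transfer_sub_const (hcard : ∀ x, Multiset.card (T x) = d) (hd : 1 ≤ d)
    (f : X → ℝ) (c : ℝ) (x : X) :
    transfer d T (fun y => f y - c) x = transfer d T f x - c := by
  have h1 : transfer d T (fun y => f y + -c) x
      = transfer d T f x + transfer d T (fun _ => -c) x := transfer_add f (fun _ => -c) x
  simp only [sub_eq_add_neg]
  rw [h1, transfer_const hcard hd]

lemma abs_transfer_le (f : X → ℝ) (x : X) :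
    |transfer d T f x| ≤ transfer d T (fun y => |f y|) x := by
  unfold transfer
  have h1 : |((T x).map f).sum| ≤ ((T x).map fun y => |f y|).sum := by
    calc |((T x).map f).sum| ≤ (((T x).map f).map abs).sum := Multiset.abs_sum_le_sum_abs
    _ = ((T x).map fun y => |f y|).sum := by rw [Multiset.map_map]; rfl
  have hd : (0:ℝ) ≤ (d : ℝ)⁻¹ := by positivity
  rw [smul_eq_mul, smul_eq_mul, abs_mul, abs_of_nonneg hd]
  exact mul_le_mul_of_nonneg_left h1 hd

lemma iterate_sub_const (hcard : ∀ x, Multiset.card (T x) = d) (hd : 1 ≤ d)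
    (f : X → ℝ) (c : ℝ) (j : ℕ) :
    (transfer d T)^[j] (fun y => f y - c) = fun x => (transfer d T)^[j] f x - c := by
  induction j with
  | zero => rfl
  | succ n ih =>
      rw [Function.iterate_succ_apply', Function.iterate_succ_apply', ih]
      funext x
      exact transfer_sub_const hcard hd _ c x

variable [MeasurableSpace X] {μ : Measure X}

lemma transfer_ae_eq (hinv : UInvariant μ d T) {f g : X → ℝ} (h : f =ᵐ[μ] g) :
    transfer d T f =ᵐ[μ] transfer d T g := by
  set h0 : X → ℝ := fun x => |f x - g x| with hh0
  have h0ae : h0 =ᵐ[μ] 0 := by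
    filter_upwards [h] with x hx
    simp [h0, hx]
  have h0int : Integrable h0 μ := (integrable_zero _ _ _).congr h0ae.symm
  obtain ⟨hint, heq⟩ := hinv h0 h0int
  have hz : ∫ x, transfer d T h0 x ∂μ = 0 := by
    rw [heq]; rw [integral_congr_ae h0ae]; simp
  have hnn : ∀ x, 0 ≤ transfer d T h0 x :=
    transfer_nonneg (fun y => abs_nonneg _)
  have : transfer d T h0 =ᵐ[μ] 0 :=
    (integral_eq_zero_iff_of_nonneg hnn hint).1 hz
  filter_upwards [this] with x hx
  have hb : |transfer d T f x - transfer d T g x| ≤ transfer d T h0 x := by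
    have : transfer d T f x - transfer d T g x = transfer d T (fun y => f y - g y) x := by
      simp only [sub_eq_add_neg, transfer_add, transfer_neg]
    rw [this, hh0]
    exact abs_transfer_le _ x
  rw [hx] at hb
  have := abs_nonpos_iff.1 (le_of_le_of_eq hb rfl)
  linarith [abs_nonneg (transfer d T f x - transfer d T g x), sub_eq_zero.1 this]

lemma iterate_ae_eq (hinv : UInvariant μ d T) {f g : X → ℝ}
    (hf : Integrable f μ) (h : f =ᵐ[μ] g) (j : ℕ) :
    (transfer d T)^[j] f =ᵐ[μ] (transfer d T)^[j] g := by
  induction j with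
  | zero => exact h
  | succ n ih =>
      rw [Function.iterate_succ_apply', Function.iterate_succ_apply']
      exact transfer_ae_eq hinv ih

lemma iterate_measurable (hTmeas : MeasCorr d T) {f : X → ℝ} (hf : Measurable f) (j : ℕ) :
    Measurable ((transfer d T)^[j] f) := by
  induction j with
  | zero => exact hf
  | succ n ih => rw [Function.iterate_succ_apply']; exact hTmeas _ ih

lemma iterate_integrable (hinv : UInvariant μ d T) {f : X → ℝ} (hf : Integrable f μ) (j : ℕ) :
    Integrable ((transfer d T)^[j] f) μ := by
  induction j with
  | zero => exact hf
  | succ n ih => rw [Function.iterate_succ_apply']; exact (hinv _ ih).1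

end MaxErgAux

namespace MaxErgAux

variable {X : Type*}

/-- Partial ergodic sums `S n = Σ_{j<n} Uʲψ`. -/
noncomputable def S (d : ℕ) (T : X → Multiset X) (ψ : X → ℝ) (n : ℕ) (x : X) : ℝ :=
  ∑ j ∈ Finset.range n, (transfer d T)^[j] ψ x

/-- Truncated nonnegative maximal function `Mp n = max (0, S 1, …, S n)`. -/
noncomputable def Mp (d : ℕ) (T : X → Multiset X) (ψ : X → ℝ) : ℕ → X → ℝ
  | 0 => fun _ => 0
  | n + 1 => fun x => max (Mp d T ψ n x) (S d T ψ (n + 1) x)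

variable {d : ℕ} {T : X → Multiset X} {ψ : X → ℝ}

lemma S_succ (n : ℕ) :
    S d T ψ (n + 1) = fun x => ψ x + transfer d T (S d T ψ n) x := by
  induction n with
  | zero =>
      funext x
      simp [S, transfer]
      right; exact Multiset.sum_eq_zero fun y hy => by obtain ⟨z, -, rfl⟩ := Multiset.mem_map.1 hy; simp [S]
  | succ n ih =>
      funext x
      have h1 : S d T ψ (n + 2) x = S d T ψ (n + 1) x + (transfer d T)^[n + 1] ψ x := by
        simp [S, Finset.sum_range_succ]
      have h2 : (transfer d T)^[n + 1] ψ = transfer d T ((transfer d T)^[n] ψ) :=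
        Function.iterate_succ_apply' _ _ _
      have h3 : ∀ y, S d T ψ (n + 1) y = S d T ψ n y + (transfer d T)^[n] ψ y := by
        intro y; simp [S, Finset.sum_range_succ]
      calc S d T ψ (n + 2) x
          = (ψ x + transfer d T (S d T ψ n) x) + (transfer d T)^[n + 1] ψ x := by
            rw [h1, ih]
        _ = ψ x + (transfer d T (S d T ψ n) x + transfer d T ((transfer d T)^[n] ψ) x) := by
            rw [h2]; ring
        _ = ψ x + transfer d T (fun y => S d T ψ n y + (transfer d T)^[n] ψ y) x := by
            rw [transfer_add]
        _ = ψ x + transfer d T (S d T ψ (n + 1)) x := by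
            have h4 : (fun y => S d T ψ n y + (transfer d T)^[n] ψ y) = S d T ψ (n + 1) :=
              funext fun y => (h3 y).symm
            rw [h4]

lemma Mp_nonneg (n : ℕ) (x : X) : 0 ≤ Mp d T ψ n x := by
  induction n with
  | zero => simp [Mp]
  | succ n ih => exact le_trans ih (le_max_left _ _)

lemma Mp_mono (x : X) : Monotone fun n => Mp d T ψ n x :=
  monotone_nat_of_le_succ fun n => le_max_left _ _

lemma S_le_Mp {k n : ℕ} (hk : k ≤ n) (x : X) : S d T ψ k x ≤ Mp d T ψ n x := by
  induction n with
  | zero =>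
      have : k = 0 := Nat.le_zero.1 hk
      simp [this, S, Mp]
  | succ n ih =>
      rcases Nat.eq_or_lt_of_le hk with h | h
      · rw [h]; exact le_max_right _ _
      · exact le_trans (ih (Nat.lt_succ_iff.1 h)) (le_max_left _ _)

lemma Mp_eq_S {n : ℕ} {x : X} (h : 0 < Mp d T ψ n x) :
    ∃ k, 1 ≤ k ∧ k ≤ n ∧ Mp d T ψ n x = S d T ψ k x := by
  induction n with
  | zero => simp [Mp] at h
  | succ n ih =>
      have hM : Mp d T ψ (n + 1) x = max (Mp d T ψ n x) (S d T ψ (n + 1) x) := rfl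
      rcases max_choice (Mp d T ψ n x) (S d T ψ (n + 1) x) with hc | hc
      · have h' : 0 < Mp d T ψ n x := by rw [hM, hc] at h; exact h
        obtain ⟨k, hk1, hkn, hkS⟩ := ih h'
        exact ⟨k, hk1, Nat.le_succ_of_le hkn, by rw [hM, hc, hkS]⟩
      · exact ⟨n + 1, Nat.succ_le_succ (Nat.zero_le n), le_refl _, by rw [hM, hc]⟩

/-- Garsia's pointwise inequality: on `{Mp n > 0}`, `ψ ≥ Mp n − U(Mp n)`. -/
lemma garsia_pointwise {n : ℕ} {x : X} (h : 0 < Mp d T ψ n x) :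
    Mp d T ψ n x - transfer d T (Mp d T ψ n) x ≤ ψ x := by
  obtain ⟨k, hk1, hkn, hkS⟩ := Mp_eq_S h
  obtain ⟨m, rfl⟩ := Nat.exists_eq_add_of_le hk1
  have hS : S d T ψ (1 + m) x = ψ x + transfer d T (S d T ψ m) x := by
    rw [Nat.add_comm 1 m, S_succ]
  have hle : transfer d T (S d T ψ m) x ≤ transfer d T (Mp d T ψ n) x :=
    transfer_mono (fun y => S_le_Mp (le_trans (Nat.le_add_left m 1) hkn) y) x
  rw [hkS, hS]
  linarith

variable [MeasurableSpace X]

lemma S_measurable (hTmeas : MeasCorr d T) (hψm : Measurable ψ) (n : ℕ) :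
    Measurable (S d T ψ n) := by
  unfold S
  exact Finset.measurable_sum _ fun j _ => iterate_measurable hTmeas hψm j

lemma Mp_measurable (hTmeas : MeasCorr d T) (hψm : Measurable ψ) (n : ℕ) :
    Measurable (Mp d T ψ n) := by
  induction n with
  | zero => simpa [Mp] using measurable_const
  | succ n ih => exact ih.max (S_measurable hTmeas hψm (n + 1))

variable {μ : Measure X}

lemma S_integrable (hinv : UInvariant μ d T) (hψi : Integrable ψ μ) (n : ℕ) :
    Integrable (S d T ψ n) μ := by
  unfold S
  exact integrable_finset_sum _ fun j _ => iterate_integrable hinv hψi j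

lemma Mp_integrable (hinv : UInvariant μ d T) (hψi : Integrable ψ μ) (n : ℕ) :
    Integrable (Mp d T ψ n) μ := by
  induction n with
  | zero => simpa [Mp] using integrable_const (0 : ℝ)
  | succ n ih =>
      have := ih.sup (S_integrable hinv hψi (n + 1))
      have heq : (Mp d T ψ n ⊔ S d T ψ (n + 1)) = Mp d T ψ (n + 1) := by
        funext x
        simp [Mp, Pi.sup_apply]
      rwa [heq] at this

end MaxErgAux

namespace MaxErgAux

variable {X : Type*} [MeasurableSpace X] {μ : Measure X} [IsFiniteMeasure μ]
variable {d : ℕ} {T : X → Multiset X}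

/-- On an almost invariant set `A`, the transfer operator does not increase the
integral of a nonnegative function. -/
lemma restricted_invariance (hinv : UInvariant μ d T)
    {A : Set X} (hA : MeasurableSet A) (hAinv : AlmostInvariant μ T A)
    {g : X → ℝ} (hgi : Integrable g μ) (hg0 : ∀ x, 0 ≤ g x) :
    ∫ x in A, transfer d T g x ∂μ ≤ ∫ x in A, g x ∂μ := by
  obtain ⟨B', hB'm, hB'sub, hB'T, hB'eq⟩ := hAinv
  have hAB' : A =ᵐ[μ] B' := by
    rw [MeasureTheory.ae_eq_set]
    refine ⟨?_, ?_⟩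
    · rw [measure_diff hB'sub hB'm.nullMeasurableSet (measure_ne_top μ B'), hB'eq, tsub_self]
    · simp [Set.diff_eq_empty.2 hB'sub]
  have hgA : Integrable (A.indicator g) μ := hgi.indicator hA
  obtain ⟨hti, hteq⟩ := hinv _ hgA
  have step1 : ∫ x in A, transfer d T g x ∂μ = ∫ x in B', transfer d T g x ∂μ :=
    setIntegral_congr_set hAB'
  have step2 : ∫ x in B', transfer d T g x ∂μ
      = ∫ x in B', transfer d T (A.indicator g) x ∂μ := by
    refine setIntegral_congr_fun hB'm fun x hx => ?_
    unfold transfer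
    congr 1
    exact congrArg Multiset.sum
      (Multiset.map_congr rfl fun y hy => Set.indicator_of_mem (hB'T x hx y hy) g).symm
  have step3 : ∫ x in B', transfer d T (A.indicator g) x ∂μ
      ≤ ∫ x, transfer d T (A.indicator g) x ∂μ :=
    setIntegral_le_integral hti (Filter.Eventually.of_forall
      (transfer_nonneg fun y => Set.indicator_nonneg (fun a _ => hg0 a) y))
  have step4 : ∫ x, transfer d T (A.indicator g) x ∂μ = ∫ x in A, g x ∂μ := by
    rw [hteq, integral_indicator hA]
  linarith

/-- Hopf's maximal inequality relative to an almost invariant set. -/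
lemma key_inequality (hd : 1 ≤ d) (hTmeas : MeasCorr d T) (hinv : UInvariant μ d T)
    {ψ : X → ℝ} (hψm : Measurable ψ) (hψi : Integrable ψ μ)
    {A : Set X} (hA : MeasurableSet A) (hAinv : AlmostInvariant μ T A) :
    0 ≤ ∫ x in {x | ∃ n, 1 ≤ n ∧ 0 < S d T ψ n x} ∩ A, ψ x ∂μ := by
  set F : ℕ → Set X := fun n => {x | 0 < Mp d T ψ n x} ∩ A with hF
  have hFmeas : ∀ n, MeasurableSet (F n) := fun n =>
    (measurableSet_lt measurable_const (Mp_measurable hTmeas hψm n)).inter hA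
  have hFmono : Monotone F := by
    intro m n hmn x hx
    exact ⟨lt_of_lt_of_le hx.1 (Mp_mono x hmn), hx.2⟩
  have hFsub : ∀ n, F n ⊆ A := fun n => Set.inter_subset_right
  have hUnion : {x | ∃ n, 1 ≤ n ∧ 0 < S d T ψ n x} ∩ A = ⋃ n, F n := by
    ext x
    constructor
    · rintro ⟨⟨n, hn1, hnS⟩, hxA⟩
      exact Set.mem_iUnion.2 ⟨n, lt_of_lt_of_le hnS (S_le_Mp (le_refl n) x), hxA⟩
    · intro hx
      obtain ⟨n, hn⟩ := Set.mem_iUnion.1 hx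
      obtain ⟨k, hk1, hkn, hkS⟩ := Mp_eq_S hn.1
      exact ⟨⟨k, hk1, hkS ▸ hn.1⟩, hn.2⟩
  -- integral over each F n is nonnegative
  have hstep : ∀ n, 0 ≤ ∫ x in F n, ψ x ∂μ := by
    intro n
    have hMi : Integrable (Mp d T ψ n) μ := Mp_integrable hinv hψi n
    have hUMi : Integrable (transfer d T (Mp d T ψ n)) μ := (hinv _ hMi).1
    have hUMnn : ∀ x, 0 ≤ transfer d T (Mp d T ψ n) x :=
      transfer_nonneg (Mp_nonneg n)
    -- ∫_{F n} ψ ≥ ∫_{F n} (Mp n − U(Mp n))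
    have h1 : ∫ x in F n, (Mp d T ψ n x - transfer d T (Mp d T ψ n) x) ∂μ
        ≤ ∫ x in F n, ψ x ∂μ := by
      refine setIntegral_mono_on ((hMi.sub hUMi).integrableOn) (hψi.integrableOn)
        (hFmeas n) fun x hx => ?_
      exact garsia_pointwise hx.1
    have h2 : ∫ x in F n, (Mp d T ψ n x - transfer d T (Mp d T ψ n) x) ∂μ
        = ∫ x in F n, Mp d T ψ n x ∂μ - ∫ x in F n, transfer d T (Mp d T ψ n) x ∂μ :=
      integral_sub hMi.integrableOn hUMi.integrableOn
    -- ∫_{F n} Mp n = ∫_A Mp n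
    have h3 : ∫ x in F n, Mp d T ψ n x ∂μ = ∫ x in A, Mp d T ψ n x ∂μ := by
      have hsplit : A = F n ∪ (A \ F n) := (Set.union_diff_cancel (hFsub n)).symm
      have hzero : ∫ x in A \ F n, Mp d T ψ n x ∂μ = 0 := by
        rw [setIntegral_congr_fun (hA.diff (hFmeas n))
          (g := fun _ => (0:ℝ)) ?_, integral_zero]
        intro x hx
        have hnotpos : ¬ 0 < Mp d T ψ n x := fun hc => hx.2 ⟨hc, hx.1⟩
        exact le_antisymm (not_lt.1 hnotpos) (Mp_nonneg n x)
      calc ∫ x in F n, Mp d T ψ n x ∂μ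
          = ∫ x in F n, Mp d T ψ n x ∂μ + ∫ x in A \ F n, Mp d T ψ n x ∂μ := by
            rw [hzero, add_zero]
        _ = ∫ x in F n ∪ (A \ F n), Mp d T ψ n x ∂μ :=
            (setIntegral_union Set.disjoint_sdiff_right (hA.diff (hFmeas n))
              hMi.integrableOn hMi.integrableOn).symm
        _ = ∫ x in A, Mp d T ψ n x ∂μ := by rw [← hsplit]
    -- ∫_{F n} U(Mp n) ≤ ∫_A U(Mp n)
    have h4 : ∫ x in F n, transfer d T (Mp d T ψ n) x ∂μ
        ≤ ∫ x in A, transfer d T (Mp d T ψ n) x ∂μ :=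
      setIntegral_mono_set hUMi.integrableOn
        (Filter.Eventually.of_forall hUMnn)
        (HasSubset.Subset.eventuallyLE (hFsub n))
    -- ∫_A U(Mp n) ≤ ∫_A Mp n
    have h5 : ∫ x in A, transfer d T (Mp d T ψ n) x ∂μ ≤ ∫ x in A, Mp d T ψ n x ∂μ :=
      restricted_invariance hinv hA hAinv hMi (Mp_nonneg n)
    linarith
  -- pass to the limit
  rw [hUnion]
  have htend := tendsto_setIntegral_of_monotone hFmeas hFmono
    (hψi.integrableOn : IntegrableOn ψ (⋃ n, F n) μ)
  exact ge_of_tendsto' htend hstep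

end MaxErgAux

open MaxErgAux

/-- **Maximal ergodic inequality for correspondences.** For real `φ ∈ L¹(μ)`
and `E_α = {x : sup_{n ≥ 1} (1/n) Σ_{j<n} Uʲφ(x) > α}`, if `A` is almost
invariant with respect to `T` and `μ`, then
`∫_{E_α ∩ A} φ dμ ≥ α · μ(E_α ∩ A)`. -/
theorem maximal_ergodic_inequality
    {X : Type*} [MeasurableSpace X] (μ : Measure X) [IsProbabilityMeasure μ]
    (d : ℕ) (hd : 1 ≤ d) (T : X → Multiset X)
    (hcard : ∀ x, Multiset.card (T x) = d)
    (hTmeas : MeasCorr d T)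
    (hinv : UInvariant μ d T)
    (φ : X → ℝ) (hφ : Integrable φ μ)
    (α : ℝ)
    (Eα : Set X)
    (hEα : Eα = {x : X | ∃ n : ℕ, 1 ≤ n ∧
      α < (1 / (n : ℝ)) * ∑ j ∈ Finset.range n, (transfer d T)^[j] φ x})
    (A : Set X) (hA : MeasurableSet A)
    (hAinv : AlmostInvariant μ T A) :
    α * (μ (Eα ∩ A)).toReal ≤ ∫ x in Eα ∩ A, φ x ∂μ := by
  classical
  have hsm := hφ.1
  set φ' : X → ℝ := hsm.mk φ with hφ'def
  have hφ'm : Measurable φ' := hsm.stronglyMeasurable_mk.measurable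
  have hae : φ =ᵐ[μ] φ' := hsm.ae_eq_mk
  have hφ'i : Integrable φ' μ := hφ.congr hae
  set ψ : X → ℝ := fun y => φ y - α with hψdef
  set ψ' : X → ℝ := fun y => φ' y - α with hψ'def
  have hψi : Integrable ψ μ := hφ.sub (integrable_const α)
  have hψ'i : Integrable ψ' μ := hφ'i.sub (integrable_const α)
  have hψ'm : Measurable ψ' := hφ'm.sub measurable_const
  have hψae : ψ =ᵐ[μ] ψ' := by
    filter_upwards [hae] with x hx
    simp only [hψdef, hψ'def, hx]
  set E' : Set X := {x | ∃ n, 1 ≤ n ∧ 0 < S d T ψ' n x} with hE'def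
  have hkey : 0 ≤ ∫ x in E' ∩ A, ψ' x ∂μ :=
    key_inequality hd hTmeas hinv hψ'm hψ'i hA hAinv
  -- rewrite Eα using the sums S of ψ
  have hEψ : Eα = {x | ∃ n, 1 ≤ n ∧ 0 < S d T ψ n x} := by
    rw [hEα]
    ext x
    simp only [Set.mem_setOf_eq]
    refine exists_congr fun n => and_congr_right fun hn => ?_
    have hn0 : (0:ℝ) < n := by exact_mod_cast hn
    have hsum : S d T ψ n x
        = (∑ j ∈ Finset.range n, (transfer d T)^[j] φ x) - n * α := by
      simp only [MaxErgAux.S, hψdef]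
      rw [Finset.sum_congr rfl fun j _ =>
        congrFun (iterate_sub_const hcard hd φ α j) x]
      rw [Finset.sum_sub_distrib, Finset.sum_const, Finset.card_range, nsmul_eq_mul]
    have harith : (α < (1 / (n:ℝ)) * ∑ j ∈ Finset.range n, (transfer d T)^[j] φ x)
        ↔ ((n:ℝ) * α < ∑ j ∈ Finset.range n, (transfer d T)^[j] φ x) := by
      rw [show (1 / (n:ℝ)) * ∑ j ∈ Finset.range n, (transfer d T)^[j] φ x
        = (∑ j ∈ Finset.range n, (transfer d T)^[j] φ x) / n by ring,
        lt_div_iff₀ hn0, mul_comm]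
    rw [hsum, sub_pos, harith]
  -- Eα ∩ A and E' ∩ A agree almost everywhere
  have hiter : ∀ᵐ x ∂μ, ∀ j, (transfer d T)^[j] ψ x = (transfer d T)^[j] ψ' x :=
    MeasureTheory.ae_all_iff.2 fun j => iterate_ae_eq hinv hψi hψae j
  have hsetae : Eα =ᵐ[μ] E' := by
    rw [Filter.eventuallyEq_set]
    filter_upwards [hiter] with x hx
    rw [hEψ, hE'def]
    simp only [Set.mem_setOf_eq, MaxErgAux.S]
    constructor <;> rintro ⟨n, hn1, hn⟩ <;> refine ⟨n, hn1, ?_⟩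
    · have heq : ∑ j ∈ Finset.range n, (transfer d T)^[j] ψ x
          = ∑ j ∈ Finset.range n, (transfer d T)^[j] ψ' x :=
        Finset.sum_congr rfl fun j _ => hx j
      exact heq ▸ hn
    · have heq : ∑ j ∈ Finset.range n, (transfer d T)^[j] ψ' x
          = ∑ j ∈ Finset.range n, (transfer d T)^[j] ψ x :=
        Finset.sum_congr rfl fun j _ => (hx j).symm
      exact heq ▸ hn
  have hEA : (Eα ∩ A : Set X) =ᵐ[μ] (E' ∩ A : Set X) := MeasureTheory.ae_eq_set_inter hsetae (Filter.EventuallyEq.refl _ _)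
  have hmeas_eq : μ (Eα ∩ A) = μ (E' ∩ A) := measure_congr hEA
  have hint_eq : ∫ x in Eα ∩ A, φ x ∂μ = ∫ x in E' ∩ A, φ' x ∂μ := by
    rw [setIntegral_congr_set hEA]
    exact integral_congr_ae (ae_restrict_of_ae hae)
  have hsub : ∫ x in E' ∩ A, ψ' x ∂μ
      = ∫ x in E' ∩ A, φ' x ∂μ - α * (μ (E' ∩ A)).toReal := by
    simp only [hψ'def]
    rw [integral_sub hφ'i.integrableOn
      (integrableOn_const (measure_ne_top μ _))]
    rw [setIntegral_const]
    simp [smul_eq_mul, mul_comm, measureReal_def]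
  rw [hmeas_eq, hint_eq]
  linarith
end
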